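/- arXiv:1502.04784 — 6 statements merged into one kernel-verified Lean document; each statement's English description precedes it below -/
import Mathlib

section
/- Let n ≥ 2 and let D_{2n} be the dihedral group of order 2n. The poset Iso(D_{2n}) is a lattice (i.e., every pair of classes has a greatest lower bound and a least upper bound in Iso(D_{2n})) if and only if n is odd or n is a power of 2. -/
/-- The setoid on subgroups of `G` given by group isomorphism. -/
def isoSetoid (G : Type*) [Group G] : Setoid (Subgroup G) where
  r H K := Nonempty (H ≃* K)
  iseqv := ⟨fun H => ⟨MulEquiv.refl H⟩, fun ⟨e⟩ => ⟨e.symm⟩, fun ⟨e⟩ ⟨f⟩ => ⟨e.trans f⟩⟩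

/-- `IsoClasses G` is the set of equivalence classes of subgroups of `G`
under group isomorphism. -/
def IsoClasses (G : Type*) [Group G] : Type _ := Quotient (isoSetoid G)

/-- The class of a subgroup `H` in `IsoClasses G`. -/
def IsoCls {G : Type*} [Group G] (H : Subgroup G) : IsoClasses G :=
  Quotient.mk (isoSetoid G) H

/-- `[H] ≤ [K]` iff some member of `[H]` is contained in some member of `[K]`. -/
instance instLEIsoClasses (G : Type*) [Group G] : LE (IsoClasses G) where
  le x y := ∃ H K : Subgroup G, IsoCls H = x ∧ IsoCls K = y ∧ H ≤ K

/-- The pair `x, y` has a greatest lower bound in `IsoClasses G`. -/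
def IsoClasses.HasGLB {G : Type*} [Group G] (x y : IsoClasses G) : Prop :=
  ∃ z : IsoClasses G, z ≤ x ∧ z ≤ y ∧ ∀ w : IsoClasses G, w ≤ x → w ≤ y → w ≤ z

/-- The pair `x, y` has a least upper bound in `IsoClasses G`. -/
def IsoClasses.HasLUB {G : Type*} [Group G] (x y : IsoClasses G) : Prop :=
  ∃ z : IsoClasses G, x ≤ z ∧ y ≤ z ∧ ∀ w : IsoClasses G, x ≤ w → y ≤ w → z ≤ w

/-- The poset `IsoClasses G` is a lattice: every pair of classes has a greatest lower
bound and a least upper bound. -/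
def IsoClasses.IsLattice (G : Type*) [Group G] : Prop :=
  ∀ x y : IsoClasses G, IsoClasses.HasGLB x y ∧ IsoClasses.HasLUB x y

/-!
A subgroup of `D_{2n}` without reflections lies in the rotation group, so it is cyclic of some
order `d ∣ n`; one containing a reflection `sr a` is generated by it and a rotation of some order
`m ∣ n`, so it is dihedral of order `2m`. Writing `C_d` and `D_m` for these classes, the order is
`C_d ≤ C_e ↔ d ∣ e`, `D_m ≤ D_{m'} ↔ m ∣ m'`, `C_d ≤ D_m ↔ d ∣ m ∨ d ∣ 2` (orders of elements)
and `D_m ≤ C_e ↔ m = 1 ∧ 2 ∣ e` (subgroups of cyclic groups are cyclic). If `n` is odd or a power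
of `2`, meets and joins are given by gcd's and lcm's of the labels, up to a few cases around
`D_1 ≅ C_2`. Otherwise `n` has an odd divisor `p > 1` with `2p ∣ n`; then `C_{2p}` and `D_p` are
upper bounds of `D_1` and `C_p`, but no upper bound of `D_1` and `C_p` lies below both.
-/
namespace IsoClasses

variable {G : Type*} [Group G]

theorem isoCls_eq_iff {H K : Subgroup G} : IsoCls H = IsoCls K ↔ Nonempty (H ≃* K) :=
  Quotient.eq

theorem isoCls_surjective : Function.Surjective (IsoCls : Subgroup G → IsoClasses G) :=
  Quotient.mk_surjective

theorem isoCls_le_isoCls {H K : Subgroup G} (h : H ≤ K) : IsoCls H ≤ IsoCls K :=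
  ⟨H, K, rfl, rfl, h⟩

theorem exists_injective_of_isoCls_le {H K : Subgroup G} (h : IsoCls H ≤ IsoCls K) :
    ∃ f : H →* K, Function.Injective f := by
  obtain ⟨H', K', hH, hK, hle⟩ := h
  obtain ⟨eH⟩ := isoCls_eq_iff.mp hH
  obtain ⟨eK⟩ := isoCls_eq_iff.mp hK
  exact ⟨eK.toMonoidHom.comp ((Subgroup.inclusion hle).comp eH.symm.toMonoidHom),
    eK.injective.comp ((Subgroup.inclusion_injective hle).comp eH.symm.injective)⟩

theorem isoCls_eq_of_isCyclic_of_card_eq {H K : Subgroup G} [IsCyclic H] [IsCyclic K]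
    (h : Nat.card H = Nat.card K) : IsoCls H = IsoCls K :=
  isoCls_eq_iff.mpr ⟨mulEquivOfCyclicCardEq h⟩

theorem isoCls_range_eq_range {A : Type*} [Group A] {f g : A →* G}
    (hf : Function.Injective f) (hg : Function.Injective g) : IsoCls f.range = IsoCls g.range :=
  isoCls_eq_iff.mpr ⟨(MonoidHom.ofInjective hf).symm.trans (MonoidHom.ofInjective hg)⟩

theorem HasGLB.symm {x y : IsoClasses G} (h : HasGLB x y) : HasGLB y x :=
  let ⟨z, hx, hy, hz⟩ := h
  ⟨z, hy, hx, fun w hwy hwx => hz w hwx hwy⟩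

theorem HasLUB.symm {x y : IsoClasses G} (h : HasLUB x y) : HasLUB y x :=
  let ⟨z, hx, hy, hz⟩ := h
  ⟨z, hy, hx, fun w hyw hxw => hz w hxw hyw⟩

end IsoClasses

theorem Nat.eq_one_or_two_dvd_of_dvd {n b : ℕ} (h : Odd n ∨ ∃ k, n = 2 ^ k) (h2 : 2 ∣ n)
    (hb : b ∣ n) : b = 1 ∨ 2 ∣ b := by
  rcases h with hodd | ⟨k, rfl⟩
  · exact absurd h2 hodd.not_two_dvd_nat
  · obtain ⟨_ | i, -, rfl⟩ := (Nat.dvd_prime_pow Nat.prime_two).mp hb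
    · exact Or.inl rfl
    · exact Or.inr (dvd_pow_self 2 i.succ_ne_zero)

theorem Nat.lcm_dvd_or_lcm_dvd_two_of_dvd_two {n d e μ : ℕ} (h : Odd n ∨ ∃ k, n = 2 ^ k)
    (hd : d ∣ n) (he : e ∣ n) (hdμ : d ∣ μ) (he2 : e ∣ 2) : d.lcm e ∣ μ ∨ d.lcm e ∣ 2 := by
  obtain rfl | rfl := (Nat.dvd_prime Nat.prime_two).mp he2
  · exact Or.inl (Nat.lcm_dvd hdμ (one_dvd μ))
  · obtain rfl | h2d := Nat.eq_one_or_two_dvd_of_dvd h he hd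
    · exact Or.inr (Nat.lcm_dvd (one_dvd 2) dvd_rfl)
    · exact Or.inl (Nat.lcm_dvd hdμ (h2d.trans hdμ))

theorem Nat.lcm_dvd_or_lcm_dvd_two {n d e μ : ℕ} (h : Odd n ∨ ∃ k, n = 2 ^ k) (hd : d ∣ n)
    (he : e ∣ n) (hdμ : d ∣ μ ∨ d ∣ 2) (heμ : e ∣ μ ∨ e ∣ 2) :
    d.lcm e ∣ μ ∨ d.lcm e ∣ 2 := by
  rcases hdμ with hdμ | hd2 <;> rcases heμ with heμ | he2
  · exact Or.inl (Nat.lcm_dvd hdμ heμ)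
  · exact Nat.lcm_dvd_or_lcm_dvd_two_of_dvd_two h hd he hdμ he2
  · rw [Nat.lcm_comm]
    exact Nat.lcm_dvd_or_lcm_dvd_two_of_dvd_two h he hd heμ hd2
  · exact Or.inr (Nat.lcm_dvd hd2 he2)

namespace DihedralGroup

open Subgroup AddSubgroup IsoClasses

variable {n m m' d e p : ℕ}

theorem orderOf_dvd_or_dvd_two (x : DihedralGroup n) : orderOf x ∣ n ∨ orderOf x ∣ 2 := by
  rcases x with i | i
  · exact Or.inl (orderOf_dvd_of_pow_eq_one (by simp))
  · exact Or.inr (orderOf_sr i).dvd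

theorem orderOf_r_eq_addOrderOf (j : ZMod n) : orderOf (r j) = addOrderOf j := by
  rw [← orderOf_ofAdd_eq_addOrderOf, orderOf_eq_orderOf_iff]
  intro k
  rw [r_pow, one_def, r.injEq, ← ofAdd_nsmul, ofAdd_eq_one, nsmul_eq_mul, mul_comm]

theorem r_mem_zpowers_r {i j : ZMod n} : r i ∈ zpowers (r j) ↔ i ∈ zmultiples j := by
  simp only [mem_zpowers_iff, mem_zmultiples_iff, r_zpow, r.injEq, zsmul_eq_mul, mul_comm]

theorem mem_zpowers_r_one {x : DihedralGroup n} : x ∈ zpowers (r 1) ↔ ∃ i, x = r i := by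
  constructor
  · rintro ⟨k, rfl⟩
    exact ⟨_, r_one_zpow k⟩
  · rintro ⟨i, rfl⟩
    exact r_mem_zpowers_r.mpr ⟨i.cast, by simp⟩

def zmodLift (j : ZMod n) (hj : m • j = 0) : ZMod m →+ ZMod n :=
  ZMod.lift m ⟨zmultiplesHom (ZMod n) j, by simpa [natCast_zsmul] using hj⟩

theorem zmodLift_intCast {j : ZMod n} (hj : m • j = 0) (k : ℤ) : zmodLift j hj k = k • j :=
  ZMod.lift_coe _ _ k

/-- The homomorphism `DihedralGroup m →* DihedralGroup n` with `r 1 ↦ r j` and `sr 0 ↦ sr a`. -/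
def lift (a j : ZMod n) (hj : m • j = 0) : DihedralGroup m →* DihedralGroup n where
  toFun
    | r i => r (zmodLift j hj i)
    | sr i => sr (a + zmodLift j hj i)
  map_one' := congrArg r (map_zero _)
  map_mul' := by
    rintro (x | x) (y | y) <;>
      simp only [r_mul_r, r_mul_sr, sr_mul_r, sr_mul_sr, map_add, map_sub, r.injEq, sr.injEq] <;>
      abel

section lift

variable {a j : ZMod n} {hj : m • j = 0}

theorem lift_r_intCast (k : ℤ) : lift a j hj (r k) = r (k • j) :=
  congrArg r (zmodLift_intCast hj k)

theorem lift_sr_intCast (k : ℤ) : lift a j hj (sr k) = sr (a + k • j) :=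
  congrArg (fun i => sr (a + i)) (zmodLift_intCast hj k)

theorem mem_range_lift {x : DihedralGroup n} :
    x ∈ (lift a j hj).range ↔ ∃ i ∈ zmultiples j, x = r i ∨ x = sr (a + i) := by
  constructor
  · rintro ⟨y | y, rfl⟩ <;> obtain ⟨k, rfl⟩ := ZMod.intCast_surjective y
    · exact ⟨k • j, zsmul_mem_zmultiples j k, Or.inl (lift_r_intCast k)⟩
    · exact ⟨k • j, zsmul_mem_zmultiples j k, Or.inr (lift_sr_intCast k)⟩
  · rintro ⟨_, ⟨k, rfl⟩, rfl | rfl⟩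
    · exact ⟨r k, lift_r_intCast k⟩
    · exact ⟨sr k, lift_sr_intCast k⟩

theorem lift_injective (h : addOrderOf j = m) : Function.Injective (lift a j hj) := by
  rw [injective_iff_map_eq_one]
  rintro (y | y) hy
  · obtain ⟨k, rfl⟩ := ZMod.intCast_surjective y
    rw [lift_r_intCast, one_def, r.injEq, ← addOrderOf_dvd_iff_zsmul_eq_zero, h] at hy
    rw [(ZMod.intCast_zmod_eq_zero_iff_dvd k m).mpr hy, r_zero]
  · rw [one_def] at hy
    cases hy

end lift

theorem nsmul_natCast_div_eq_zero (hm : m ∣ n) : m • ((n / m : ℕ) : ZMod n) = 0 := by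
  rw [nsmul_eq_mul, ← Nat.cast_mul, Nat.mul_div_cancel' hm, ZMod.natCast_self]

theorem natCast_div_mem_zmultiples (hde : d ∣ e) (he : e ∣ n) :
    ((n / d : ℕ) : ZMod n) ∈ zmultiples ((n / e : ℕ) : ZMod n) := by
  refine ⟨(e / d : ℕ), ?_⟩
  show ((e / d : ℕ) : ℤ) • _ = _
  rw [natCast_zsmul, nsmul_eq_mul, ← Nat.cast_mul, mul_comm, Nat.div_mul_div he hde]

/-- For `d ∣ n`, the rotation subgroup of order `d`. -/
abbrev cyclicSubgroup (n d : ℕ) : Subgroup (DihedralGroup n) :=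
  zpowers (r ((n / d : ℕ) : ZMod n))

def dihedralSubgroup (hm : m ∣ n) : Subgroup (DihedralGroup n) :=
  (lift 0 ((n / m : ℕ) : ZMod n) (nsmul_natCast_div_eq_zero hm)).range

def cyclicClass (n d : ℕ) : IsoClasses (DihedralGroup n) := IsoCls (cyclicSubgroup n d)

def dihedralClass (hm : m ∣ n) : IsoClasses (DihedralGroup n) := IsoCls (dihedralSubgroup hm)

theorem cyclicSubgroup_mono (hde : d ∣ e) (he : e ∣ n) :
    cyclicSubgroup n d ≤ cyclicSubgroup n e :=
  zpowers_le.mpr (r_mem_zpowers_r.mpr (natCast_div_mem_zmultiples hde he))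

theorem cyclicSubgroup_le_dihedralSubgroup (hdm : d ∣ m) (hm : m ∣ n) :
    cyclicSubgroup n d ≤ dihedralSubgroup hm :=
  zpowers_le.mpr (mem_range_lift.mpr ⟨_, natCast_div_mem_zmultiples hdm hm, Or.inl rfl⟩)

theorem dihedralSubgroup_mono {hm : m ∣ n} (hmm' : m ∣ m') (hm' : m' ∣ n) :
    dihedralSubgroup hm ≤ dihedralSubgroup hm' := by
  intro x hx
  obtain ⟨i, hi, hx⟩ := mem_range_lift.mp hx
  exact mem_range_lift.mpr
    ⟨i, zmultiples_le.mpr (natCast_div_mem_zmultiples hmm' hm') hi, hx⟩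

variable [NeZero n]

theorem addOrderOf_natCast_div (hm : m ∣ n) :
    addOrderOf ((n / m : ℕ) : ZMod n) = m := by
  rw [ZMod.addOrderOf_coe _ (NeZero.ne n), Nat.gcd_eq_right (Nat.div_dvd_of_dvd hm),
    Nat.div_div_self hm (NeZero.ne n)]

theorem card_cyclicSubgroup (hd : d ∣ n) : Nat.card (cyclicSubgroup n d) = d := by
  rw [cyclicSubgroup, Nat.card_zpowers, orderOf_r_eq_addOrderOf, addOrderOf_natCast_div hd]

theorem nonempty_mulEquiv_dihedralSubgroup (hm : m ∣ n) :
    Nonempty (DihedralGroup m ≃* dihedralSubgroup hm) :=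
  ⟨MonoidHom.ofInjective (lift_injective (addOrderOf_natCast_div hm))⟩

theorem card_dihedralSubgroup (hm : m ∣ n) :
    Nat.card (dihedralSubgroup hm) = 2 * m := by
  obtain ⟨φ⟩ := nonempty_mulEquiv_dihedralSubgroup hm
  rw [← Nat.card_congr φ.toEquiv, nat_card]

theorem exists_isoCls_eq_cyclicClass {H : Subgroup (DihedralGroup n)}
    (hH : H ≤ zpowers (r 1)) : ∃ d, d ∣ n ∧ IsoCls H = cyclicClass n d := by
  have : IsCyclic H := isCyclic_of_le hH
  have hd : Nat.card H ∣ n := by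
    simpa only [Nat.card_zpowers, orderOf_r_one] using card_dvd_of_le hH
  exact ⟨_, hd, isoCls_eq_of_isCyclic_of_card_eq (card_cyclicSubgroup hd).symm⟩

theorem exists_isoCls_eq_dihedralClass {H : Subgroup (DihedralGroup n)} {a : ZMod n}
    (ha : sr a ∈ H) : ∃ m, ∃ hm : m ∣ n, IsoCls H = dihedralClass hm := by
  obtain ⟨g, hg⟩ := (H ⊓ zpowers (r 1)).isCyclic_iff_exists_zpowers_eq_top.mp
    (isCyclic_of_le inf_le_right)
  obtain ⟨j, rfl⟩ := mem_zpowers_r_one.mp (Subgroup.mem_inf.mp (hg ▸ mem_zpowers g)).2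
  have hm : addOrderOf j ∣ n := by
    simpa only [← hg, Nat.card_zpowers, orderOf_r_eq_addOrderOf, ZMod.addOrderOf_one]
      using card_dvd_of_le (inf_le_right : H ⊓ zpowers (r 1) ≤ _)
  have hr : ∀ i, r i ∈ H ↔ i ∈ zmultiples j := fun i => by
    rw [← r_mem_zpowers_r, hg, Subgroup.mem_inf, and_iff_left (mem_zpowers_r_one.mpr ⟨i, rfl⟩)]
  have hH : H = (lift a j (addOrderOf_nsmul_eq_zero j)).range := by
    ext (i | b) <;> rw [mem_range_lift]
    · simp [hr]
    · rw [← H.mul_mem_cancel_left ha, sr_mul_sr, hr]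
      simp [eq_comm (a := b), ← eq_sub_iff_add_eq']
  refine ⟨_, hm, ?_⟩
  rw [hH]
  exact isoCls_range_eq_range (lift_injective rfl) (lift_injective (addOrderOf_natCast_div hm))

theorem isoClasses_induction {P : IsoClasses (DihedralGroup n) → Prop}
    (cyclic : ∀ d, d ∣ n → P (cyclicClass n d))
    (dihedral : ∀ m (hm : m ∣ n), P (dihedralClass hm)) : ∀ x, P x := by
  refine isoCls_surjective.forall.mpr fun H => ?_
  by_cases hsr : ∃ a, sr a ∈ H
  · obtain ⟨a, ha⟩ := hsr
    obtain ⟨m, hm, hH⟩ := exists_isoCls_eq_dihedralClass ha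
    exact hH ▸ dihedral m hm
  · have hH : H ≤ zpowers (r 1) := by
      rintro (i | a) hx
      · exact mem_zpowers_r_one.mpr ⟨i, rfl⟩
      · exact absurd ⟨a, hx⟩ hsr
    obtain ⟨d, hd, hH⟩ := exists_isoCls_eq_cyclicClass hH
    exact hH ▸ cyclic d hd

theorem dihedralClass_one_eq_cyclicClass_two (h2 : 2 ∣ n) :
    dihedralClass (one_dvd n) = cyclicClass n 2 := by
  have hcard : Nat.card (dihedralSubgroup (one_dvd n)) = 2 := card_dihedralSubgroup (one_dvd n)
  have : Fact (Nat.Prime 2) := ⟨Nat.prime_two⟩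
  have : IsCyclic (dihedralSubgroup (one_dvd n)) := isCyclic_of_prime_card hcard
  exact isoCls_eq_of_isCyclic_of_card_eq (hcard.trans (card_cyclicSubgroup h2).symm)

theorem cyclicClass_le_cyclicClass (hd : d ∣ n) (he : e ∣ n) :
    cyclicClass n d ≤ cyclicClass n e ↔ d ∣ e := by
  refine ⟨fun h => ?_, fun h => isoCls_le_isoCls (cyclicSubgroup_mono h he)⟩
  obtain ⟨f, hf⟩ := exists_injective_of_isoCls_le h
  simpa only [card_cyclicSubgroup hd, card_cyclicSubgroup he] using card_dvd_of_injective f hf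

theorem dihedralClass_le_dihedralClass {hm : m ∣ n} {hm' : m' ∣ n} :
    dihedralClass hm ≤ dihedralClass hm' ↔ m ∣ m' := by
  refine ⟨fun h => ?_, fun h => isoCls_le_isoCls (dihedralSubgroup_mono h hm')⟩
  obtain ⟨f, hf⟩ := exists_injective_of_isoCls_le h
  have := card_dvd_of_injective f hf
  rwa [card_dihedralSubgroup, card_dihedralSubgroup, Nat.mul_dvd_mul_iff_left two_pos] at this

theorem cyclicClass_le_dihedralClass (hd : d ∣ n) {hm : m ∣ n} :
    cyclicClass n d ≤ dihedralClass hm ↔ d ∣ m ∨ d ∣ 2 := by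
  constructor
  · intro h
    obtain ⟨f, hf⟩ := exists_injective_of_isoCls_le h
    obtain ⟨φ⟩ := nonempty_mulEquiv_dihedralSubgroup hm
    have hg : orderOf (⟨_, mem_zpowers _⟩ : cyclicSubgroup n d) = d := by
      rw [Subgroup.orderOf_mk, orderOf_r_eq_addOrderOf, addOrderOf_natCast_div hd]
    rw [← hg, ← orderOf_injective f hf, ← orderOf_injective φ.symm.toMonoidHom φ.symm.injective]
    exact orderOf_dvd_or_dvd_two _
  · rintro (h | h)
    · exact isoCls_le_isoCls (cyclicSubgroup_le_dihedralSubgroup h hm)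
    · obtain rfl | rfl := (Nat.dvd_prime Nat.prime_two).mp h
      · exact isoCls_le_isoCls (cyclicSubgroup_le_dihedralSubgroup (one_dvd m) hm)
      · rw [← dihedralClass_one_eq_cyclicClass_two hd]
        exact isoCls_le_isoCls (dihedralSubgroup_mono (one_dvd m) hm)

theorem dihedralClass_le_cyclicClass {hm : m ∣ n} (he : e ∣ n) :
    dihedralClass hm ≤ cyclicClass n e ↔ m = 1 ∧ 2 ∣ e := by
  constructor
  · intro h
    obtain ⟨f, hf⟩ := exists_injective_of_isoCls_le h
    obtain ⟨φ⟩ := nonempty_mulEquiv_dihedralSubgroup hm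
    have : IsCyclic (DihedralGroup m) :=
      isCyclic_of_injective (f.comp φ.toMonoidHom) (hf.comp φ.injective)
    obtain rfl := isCyclic_iff.mp this
    have := card_dvd_of_injective f hf
    rw [card_dihedralSubgroup, card_cyclicSubgroup he, mul_one] at this
    exact ⟨rfl, this⟩
  · rintro ⟨rfl, h2⟩
    rw [dihedralClass_one_eq_cyclicClass_two (h2.trans he)]
    exact isoCls_le_isoCls (cyclicSubgroup_mono h2 he)

theorem hasGLB_cyclicClass_cyclicClass (hd : d ∣ n) (he : e ∣ n) :
    HasGLB (cyclicClass n d) (cyclicClass n e) := by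
  have hg : d.gcd e ∣ n := (Nat.gcd_dvd_left d e).trans hd
  refine ⟨cyclicClass n (d.gcd e), (cyclicClass_le_cyclicClass hg hd).2 (Nat.gcd_dvd_left d e),
    (cyclicClass_le_cyclicClass hg he).2 (Nat.gcd_dvd_right d e),
    isoClasses_induction (fun f hf => ?_) (fun μ hμ => ?_)⟩
  · simp only [cyclicClass_le_cyclicClass hf hd, cyclicClass_le_cyclicClass hf he,
      cyclicClass_le_cyclicClass hf hg]
    exact Nat.dvd_gcd
  · simp only [dihedralClass_le_cyclicClass hd, dihedralClass_le_cyclicClass he,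
      dihedralClass_le_cyclicClass hg]
    rintro ⟨rfl, h2d⟩ ⟨-, h2e⟩
    exact ⟨rfl, Nat.dvd_gcd h2d h2e⟩

theorem hasGLB_dihedralClass_dihedralClass (hm : m ∣ n) (hm' : m' ∣ n) :
    HasGLB (dihedralClass hm) (dihedralClass hm') := by
  have hg : m.gcd m' ∣ n := (Nat.gcd_dvd_left m m').trans hm
  refine ⟨dihedralClass hg, dihedralClass_le_dihedralClass.2 (Nat.gcd_dvd_left m m'),
    dihedralClass_le_dihedralClass.2 (Nat.gcd_dvd_right m m'),
    isoClasses_induction (fun f hf => ?_) (fun μ hμ => ?_)⟩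
  · simp only [cyclicClass_le_dihedralClass hf]
    rintro (hfm | hf2) (hfm' | hf2')
    exacts [Or.inl (Nat.dvd_gcd hfm hfm'), Or.inr hf2', Or.inr hf2, Or.inr hf2]
  · simp only [dihedralClass_le_dihedralClass]
    exact Nat.dvd_gcd

theorem hasLUB_dihedralClass_dihedralClass (hm : m ∣ n) (hm' : m' ∣ n) :
    HasLUB (dihedralClass hm) (dihedralClass hm') := by
  have hl : m.lcm m' ∣ n := Nat.lcm_dvd hm hm'
  refine ⟨dihedralClass hl, dihedralClass_le_dihedralClass.2 (Nat.dvd_lcm_left m m'),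
    dihedralClass_le_dihedralClass.2 (Nat.dvd_lcm_right m m'),
    isoClasses_induction (fun f hf => ?_) (fun μ hμ => ?_)⟩
  · simp only [dihedralClass_le_cyclicClass hf]
    rintro ⟨rfl, h2f⟩ ⟨rfl, -⟩
    exact ⟨Nat.lcm_self 1, h2f⟩
  · simp only [dihedralClass_le_dihedralClass]
    exact Nat.lcm_dvd

theorem hasLUB_cyclicClass_cyclicClass (hn : Odd n ∨ ∃ k, n = 2 ^ k) (hd : d ∣ n)
    (he : e ∣ n) :
    HasLUB (cyclicClass n d) (cyclicClass n e) := by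
  have hl : d.lcm e ∣ n := Nat.lcm_dvd hd he
  refine ⟨cyclicClass n (d.lcm e), (cyclicClass_le_cyclicClass hd hl).2 (Nat.dvd_lcm_left d e),
    (cyclicClass_le_cyclicClass he hl).2 (Nat.dvd_lcm_right d e),
    isoClasses_induction (fun f hf => ?_) (fun μ hμ => ?_)⟩
  · simp only [cyclicClass_le_cyclicClass hd hf, cyclicClass_le_cyclicClass he hf,
      cyclicClass_le_cyclicClass hl hf]
    exact Nat.lcm_dvd
  · simp only [cyclicClass_le_dihedralClass hd, cyclicClass_le_dihedralClass he,
      cyclicClass_le_dihedralClass hl]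
    exact Nat.lcm_dvd_or_lcm_dvd_two hn hd he

theorem hasGLB_cyclicClass_dihedralClass (hn : Odd n ∨ ∃ k, n = 2 ^ k) (hd : d ∣ n)
    (hm : m ∣ n) :
    HasGLB (cyclicClass n d) (dihedralClass hm) := by
  by_cases hc : 2 ∣ d ∧ m = 1
  · obtain ⟨h2d, rfl⟩ := hc
    refine ⟨dihedralClass hm, (dihedralClass_le_cyclicClass hd).2 ⟨rfl, h2d⟩,
      dihedralClass_le_dihedralClass.2 dvd_rfl, fun _ _ h => h⟩
  have h2m : 2 ∣ d → 2 ∣ m := fun h2d =>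
    (Nat.eq_one_or_two_dvd_of_dvd hn (h2d.trans hd) hm).resolve_left fun hm1 => hc ⟨h2d, hm1⟩
  have hg : d.gcd m ∣ n := (Nat.gcd_dvd_left d m).trans hd
  refine ⟨cyclicClass n (d.gcd m), (cyclicClass_le_cyclicClass hg hd).2 (Nat.gcd_dvd_left d m),
    (cyclicClass_le_dihedralClass hg).2 (Or.inl (Nat.gcd_dvd_right d m)),
    isoClasses_induction (fun f hf => ?_) (fun μ hμ => ?_)⟩
  · simp only [cyclicClass_le_cyclicClass hf hd, cyclicClass_le_dihedralClass hf,
      cyclicClass_le_cyclicClass hf hg]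
    rintro hfd (hfm | hf2)
    · exact Nat.dvd_gcd hfd hfm
    · obtain rfl | rfl := (Nat.dvd_prime Nat.prime_two).mp hf2
      exacts [one_dvd _, Nat.dvd_gcd hfd (h2m hfd)]
  · simp only [dihedralClass_le_cyclicClass hd, dihedralClass_le_cyclicClass hg]
    rintro ⟨rfl, h2d⟩ -
    exact ⟨rfl, Nat.dvd_gcd h2d (h2m h2d)⟩

theorem hasLUB_cyclicClass_dihedralClass (hn : Odd n ∨ ∃ k, n = 2 ^ k) (hd : d ∣ n)
    (hm : m ∣ n) :
    HasLUB (cyclicClass n d) (dihedralClass hm) := by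
  by_cases hd2 : d ∣ 2
  · exact ⟨_, (cyclicClass_le_dihedralClass hd).2 (Or.inr hd2),
      dihedralClass_le_dihedralClass.2 dvd_rfl, fun _ _ h => h⟩
  by_cases hc : m = 1 ∧ 2 ∣ d
  · obtain ⟨rfl, h2d⟩ := hc
    refine ⟨cyclicClass n d, (cyclicClass_le_cyclicClass hd hd).2 dvd_rfl,
      (dihedralClass_le_cyclicClass hd).2 ⟨rfl, h2d⟩, fun _ h _ => h⟩
  have hl : d.lcm m ∣ n := Nat.lcm_dvd hd hm
  refine ⟨dihedralClass hl, (cyclicClass_le_dihedralClass hd).2 (Or.inl (Nat.dvd_lcm_left d m)),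
    dihedralClass_le_dihedralClass.2 (Nat.dvd_lcm_right d m),
    isoClasses_induction (fun f hf => ?_) (fun μ hμ => ?_)⟩
  · simp only [dihedralClass_le_cyclicClass hf]
    rintro - ⟨rfl, h2f⟩
    rcases Nat.eq_one_or_two_dvd_of_dvd hn (h2f.trans hf) hd with rfl | h2d
    exacts [absurd (one_dvd 2) hd2, absurd ⟨rfl, h2d⟩ hc]
  · simp only [cyclicClass_le_dihedralClass hd, dihedralClass_le_dihedralClass]
    rintro (hdμ | hd2') hmμ
    exacts [Nat.lcm_dvd hdμ hmμ, absurd hd2' hd2]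

theorem isLattice_of_odd_or_eq_two_pow (hn : Odd n ∨ ∃ k, n = 2 ^ k) :
    IsLattice (DihedralGroup n) := by
  refine isoClasses_induction (fun d hd => isoClasses_induction (fun e he => ?_) (fun m hm => ?_))
    (fun m hm => isoClasses_induction (fun d hd => ?_) (fun m' hm' => ?_))
  · exact ⟨hasGLB_cyclicClass_cyclicClass hd he, hasLUB_cyclicClass_cyclicClass hn hd he⟩
  · exact ⟨hasGLB_cyclicClass_dihedralClass hn hd hm, hasLUB_cyclicClass_dihedralClass hn hd hm⟩
  · exact ⟨(hasGLB_cyclicClass_dihedralClass hn hd hm).symm,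
      (hasLUB_cyclicClass_dihedralClass hn hd hm).symm⟩
  · exact ⟨hasGLB_dihedralClass_dihedralClass hm hm', hasLUB_dihedralClass_dihedralClass hm hm'⟩

theorem not_hasLUB_dihedralClass_one_cyclicClass (hp : Odd p) (hp1 : p ≠ 1) (h2p : 2 * p ∣ n) :
    ¬ HasLUB (dihedralClass (one_dvd n)) (cyclicClass n p) := by
  rintro ⟨z, h1z, hpz, hz⟩
  have hpn : p ∣ n := (dvd_mul_left p 2).trans h2p
  have hp2 : ¬ p ∣ 2 := fun h => hp1 ((Nat.coprime_two_right.mpr hp).eq_one_of_dvd h)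
  have hzC : z ≤ cyclicClass n (2 * p) :=
    hz _ ((dihedralClass_le_cyclicClass h2p).2 ⟨rfl, dvd_mul_right 2 p⟩)
      ((cyclicClass_le_cyclicClass hpn h2p).2 (dvd_mul_left p 2))
  have hzD : z ≤ dihedralClass hpn :=
    hz _ (dihedralClass_le_dihedralClass.2 (one_dvd p))
      ((cyclicClass_le_dihedralClass hpn).2 (Or.inl dvd_rfl))
  clear hz
  revert z
  refine isoClasses_induction (fun f hf => ?_) (fun μ hμ => ?_)
  · simp only [dihedralClass_le_cyclicClass hf, cyclicClass_le_cyclicClass hpn hf,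
      cyclicClass_le_dihedralClass hf]
    rintro ⟨-, h2f⟩ hpf - (hfp | hf2)
    exacts [hp.not_two_dvd_nat (h2f.trans hfp), hp2 (hpf.trans hf2)]
  · simp only [cyclicClass_le_dihedralClass hpn, dihedralClass_le_cyclicClass h2p]
    rintro - (hp1' | hp2') ⟨rfl, -⟩ -
    exacts [hp1 (Nat.dvd_one.mp hp1'), hp2 hp2']

theorem odd_or_eq_two_pow_of_isLattice (h : IsLattice (DihedralGroup n)) :
    Odd n ∨ ∃ k, n = 2 ^ k := by
  obtain ⟨k, p, hp, hkp⟩ := Nat.exists_eq_two_pow_mul_odd (NeZero.ne n)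
  by_contra hbad
  have hk : k ≠ 0 := by
    rintro rfl
    exact hbad (Or.inl (by simpa [hkp] using hp))
  have hp1 : p ≠ 1 := by
    rintro rfl
    exact hbad (Or.inr ⟨k, by simpa using hkp⟩)
  have h2p : 2 * p ∣ n := hkp ▸ mul_dvd_mul_right (dvd_pow_self 2 hk) p
  exact not_hasLUB_dihedralClass_one_cyclicClass hp hp1 h2p (h _ _).2

end DihedralGroup

/-- For `n ≥ 2`, the poset `IsoClasses (DihedralGroup n)` is a lattice
if and only if `n` is odd or `n` is a power of `2`. -/
theorem isoClasses_dihedral_isLattice_iff (n : ℕ) (hn : 2 ≤ n) :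
    IsoClasses.IsLattice (DihedralGroup n) ↔ (Odd n ∨ ∃ k : ℕ, n = 2 ^ k) := by
  have : NeZero n := ⟨by omega⟩
  exact ⟨DihedralGroup.odd_or_eq_two_pow_of_isLattice,
    DihedralGroup.isLattice_of_odd_or_eq_two_pow⟩
end

section
/- Let p be a prime, n a natural number, and let G₁ be a finite group of order p^n. If G₂ is a finite group such that there is an order isomorphism between the posets Iso(G₁) and Iso(G₂), then there is a prime q with |G₂| = q^n. -/
section Aux

variable {G : Type*} [Group G]

lemma isoCls_eq_iff {H K : Subgroup G} : IsoCls H = IsoCls K ↔ Nonempty (H ≃* K) :=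
  ⟨Quotient.exact, fun h => @Quotient.sound _ (isoSetoid G) H K h⟩

/-- Cardinality, as an invariant of isomorphism classes. -/
noncomputable def clsCard : IsoClasses G → ℕ :=
  Quotient.lift (fun H : Subgroup G => Nat.card H)
    (fun _ _ ⟨e⟩ => Nat.card_congr e.toEquiv)

@[simp] lemma clsCard_isoCls (H : Subgroup G) : clsCard (IsoCls H) = Nat.card H := rfl

lemma isoCls_exists_rep (x : IsoClasses G) : ∃ H : Subgroup G, IsoCls H = x :=
  Quotient.exists_rep x

lemma isoCls_bot_le (x : IsoClasses G) : IsoCls (⊥ : Subgroup G) ≤ x := by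
  obtain ⟨K, rfl⟩ := isoCls_exists_rep x
  exact ⟨⊥, K, rfl, rfl, bot_le⟩

lemma clsCard_dvd_of_le {x y : IsoClasses G} (hxy : x ≤ y) : clsCard x ∣ clsCard y := by
  obtain ⟨H, K, hH, hK, hle⟩ := hxy
  rw [← hH, ← hK, clsCard_isoCls, clsCard_isoCls]
  exact Subgroup.card_dvd_of_le hle

lemma clsCard_dvd_card [Finite G] (x : IsoClasses G) : clsCard x ∣ Nat.card G := by
  obtain ⟨H, rfl⟩ := isoCls_exists_rep x
  rw [clsCard_isoCls]
  exact Subgroup.card_subgroup_dvd_card H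

lemma eq_of_le_of_clsCard_eq [Finite G] {x y : IsoClasses G} (hxy : x ≤ y)
    (hc : clsCard x = clsCard y) : x = y := by
  obtain ⟨H, K, hH, hK, hle⟩ := hxy
  subst hH; subst hK
  rw [clsCard_isoCls, clsCard_isoCls] at hc
  refine isoCls_eq_iff.mpr ⟨MulEquiv.ofBijective (Subgroup.inclusion hle) ?_⟩
  exact (Nat.bijective_iff_injective_and_card _).mpr ⟨Subgroup.inclusion_injective hle, hc⟩

lemma isoClasses_le_antisymm [Finite G] {x y : IsoClasses G} (hxy : x ≤ y) (hyx : y ≤ x) :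
    x = y := by
  refine eq_of_le_of_clsCard_eq hxy (Nat.dvd_antisymm (clsCard_dvd_of_le hxy)
    (clsCard_dvd_of_le hyx))

lemma clsCard_eq_one_iff {x : IsoClasses G} : clsCard x = 1 ↔ x = IsoCls (⊥ : Subgroup G) := by
  obtain ⟨H, rfl⟩ := isoCls_exists_rep x
  rw [clsCard_isoCls, Subgroup.card_eq_one]
  constructor
  · rintro rfl; rfl
  · intro h
    obtain ⟨e⟩ := isoCls_eq_iff.mp h
    have := Nat.card_congr e.toEquiv
    rw [Subgroup.card_bot] at this
    exact Subgroup.card_eq_one.mp this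

lemma clsCard_pos [Finite G] (x : IsoClasses G) : 0 < clsCard x := by
  obtain ⟨H, rfl⟩ := isoCls_exists_rep x
  rw [clsCard_isoCls]
  exact Nat.card_pos

/-- existence of a subgroup of prime order inside a subgroup of divisible order -/
lemma exists_prime_subgroup_le [Finite G] {p : ℕ} (hp : p.Prime) {H : Subgroup G}
    (hpH : p ∣ Nat.card H) : ∃ P : Subgroup G, P ≤ H ∧ Nat.card P = p := by
  haveI : Fact p.Prime := ⟨hp⟩
  obtain ⟨h, hh⟩ := exists_prime_orderOf_dvd_card' (G := H) p hpH
  refine ⟨(Subgroup.zpowers h).map H.subtype, Subgroup.map_subtype_le _, ?_⟩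
  rw [← Nat.card_congr ((Subgroup.zpowers h).equivMapOfInjective H.subtype
    H.subtype_injective).toEquiv]
  rw [Nat.card_zpowers, hh]

lemma subsingleton_isoClasses (h : Nat.card G = 1) : Subsingleton (IsoClasses G) := by
  have : Subsingleton G := (Nat.card_eq_one_iff_unique.mp h).1
  have hsub : Subsingleton (Subgroup G) :=
    ⟨fun H K => by
      ext g
      rw [Subsingleton.elim g 1]
      exact iff_of_true H.one_mem K.one_mem⟩
  constructor
  intro a b
  obtain ⟨H, rfl⟩ := isoCls_exists_rep a
  obtain ⟨K, rfl⟩ := isoCls_exists_rep b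
  rw [Subsingleton.elim H K]

lemma card_eq_one_of_subsingleton_isoClasses [Finite G]
    (h : Subsingleton (IsoClasses G)) : Nat.card G = 1 := by
  have : IsoCls (⊤ : Subgroup G) = IsoCls ⊥ := Subsingleton.elim _ _
  obtain ⟨e⟩ := isoCls_eq_iff.mp this
  have := Nat.card_congr e.toEquiv
  rw [Subgroup.card_bot] at this
  rw [← this, Subgroup.card_top]

end Aux

section Iso

variable {G₁ G₂ : Type*} [Group G₁] [Group G₂]

lemma orderIso_map_bot [Finite G₂] (e : IsoClasses G₁ ≃o IsoClasses G₂) :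
    e (IsoCls (⊥ : Subgroup G₁)) = IsoCls (⊥ : Subgroup G₂) := by
  refine isoClasses_le_antisymm ?_ (isoCls_bot_le _)
  have h := e.map_rel_iff.mpr (isoCls_bot_le (e.symm (IsoCls (⊥ : Subgroup G₂))))
  rwa [e.apply_symm_apply] at h

lemma le_of_isoClasses_orderIso [Finite G₁] [Finite G₂] {p q n m : ℕ}
    (hp : p.Prime) (hq : q.Prime) (h₁ : Nat.card G₁ = p ^ n) (h₂ : Nat.card G₂ = q ^ m)
    (e : IsoClasses G₁ ≃o IsoClasses G₂) : n ≤ m := by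
  haveI : Fact p.Prime := ⟨hp⟩
  have main : ∀ i, i ≤ n → ∃ H : Subgroup G₁, Nat.card H = p ^ i ∧
      q ^ i ∣ clsCard (e (IsoCls H)) := by
    intro i
    induction i with
    | zero => exact fun _ => ⟨⊥, by simp [Subgroup.card_bot], one_dvd _⟩
    | succ i ih =>
      intro hin
      obtain ⟨H, hH, hdvd⟩ := ih (Nat.le_of_succ_le hin)
      obtain ⟨K, hK, hHK⟩ := Sylow.exists_subgroup_card_pow_succ
        (G := G₁) (p := p) (n := i) (by rw [h₁]; exact pow_dvd_pow p hin) hH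
      refine ⟨K, hK, ?_⟩
      have hle : e (IsoCls H) ≤ e (IsoCls K) := e.map_rel_iff.mpr ⟨H, K, rfl, rfl, hHK⟩
      have hne : clsCard (e (IsoCls H)) ≠ clsCard (e (IsoCls K)) := by
        intro hc
        have := e.injective (eq_of_le_of_clsCard_eq hle hc)
        have hcard := congrArg clsCard this
        rw [clsCard_isoCls, clsCard_isoCls, hH, hK] at hcard
        exact absurd hcard (by
          have := hp.one_lt
          exact Nat.ne_of_lt (Nat.pow_lt_pow_right this (Nat.lt_succ_self i)))
      have h1 : clsCard (e (IsoCls H)) ∣ clsCard (e (IsoCls K)) := clsCard_dvd_of_le hle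
      have h3 : clsCard (e (IsoCls K)) ∣ q ^ m := h₂ ▸ clsCard_dvd_card _
      have h4 : clsCard (e (IsoCls H)) ∣ q ^ m := h1.trans h3
      obtain ⟨a, _, ha⟩ := (Nat.dvd_prime_pow hq).mp h4
      obtain ⟨b, _, hb⟩ := (Nat.dvd_prime_pow hq).mp h3
      rw [hb]
      have hab : a < b := by
        have hd : q ^ a ∣ q ^ b := by rw [← ha, ← hb]; exact h1
        have hab' : a ≤ b := (Nat.pow_dvd_pow_iff_le_right hq.one_lt).mp hd
        rcases Nat.lt_or_ge a b with h | h
        · exact h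
        · have : a = b := le_antisymm hab' h
          exact absurd (by rw [ha, hb, this]) hne
      have hia : i ≤ a := by
        have : q ^ i ∣ q ^ a := by rw [← ha]; exact hdvd
        exact (Nat.pow_dvd_pow_iff_le_right hq.one_lt).mp this
      exact pow_dvd_pow q (by omega)
  obtain ⟨H, _, hdvd⟩ := main n le_rfl
  have h5 : clsCard (e (IsoCls H)) ∣ q ^ m := h₂ ▸ clsCard_dvd_card _
  exact (Nat.pow_dvd_pow_iff_le_right hq.one_lt).mp (hdvd.trans h5)

end Iso

/-- If `G₁` is a finite group of order `p ^ n` and `G₂` is a finite group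
with `IsoClasses G₁` order isomorphic to `IsoClasses G₂`, then `|G₂| = q ^ n` for some
prime `q`. -/
theorem card_eq_prime_pow_of_isoClasses_orderIso (p n : ℕ) (hp : p.Prime)
    (G₁ : Type*) [Group G₁] [Finite G₁] (G₂ : Type*) [Group G₂] [Finite G₂]
    (h₁ : Nat.card G₁ = p ^ n) (h : Nonempty (IsoClasses G₁ ≃o IsoClasses G₂)) :
    ∃ q : ℕ, q.Prime ∧ Nat.card G₂ = q ^ n := by
  obtain ⟨e⟩ := h
  rcases Nat.eq_zero_or_pos n with rfl | hn
  · refine ⟨2, Nat.prime_two, ?_⟩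
    rw [pow_zero] at h₁ ⊢
    have hs : Subsingleton (IsoClasses G₁) := subsingleton_isoClasses h₁
    have hs₂ : Subsingleton (IsoClasses G₂) := e.toEquiv.symm.subsingleton
    exact card_eq_one_of_subsingleton_isoClasses hs₂
  · haveI : Fact p.Prime := ⟨hp⟩
    -- `G₂` is nontrivial
    have hG₂ : Nat.card G₂ ≠ 1 := by
      intro h1
      have hs₂ : Subsingleton (IsoClasses G₂) := subsingleton_isoClasses h1
      have hs : Subsingleton (IsoClasses G₁) := e.toEquiv.subsingleton
      have := card_eq_one_of_subsingleton_isoClasses hs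
      rw [h₁] at this
      have hp1 : p ∣ 1 := this ▸ dvd_pow_self p hn.ne'
      exact hp.one_lt.ne' (Nat.eq_one_of_dvd_one hp1)
    set N := Nat.card G₂ with hN
    have hq : N.minFac.Prime := Nat.minFac_prime hG₂
    -- every prime dividing `N` equals `N.minFac`
    have key : ∀ r, r.Prime → r ∣ N → r = N.minFac := by
      intro r hr hrN
      haveI : Fact r.Prime := ⟨hr⟩
      haveI : Fact N.minFac.Prime := ⟨hq⟩
      -- produce subgroups of order r and N.minFac in G₂
      obtain ⟨gR, hgR⟩ := exists_prime_orderOf_dvd_card' (G := G₂) r hrN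
      obtain ⟨gQ, hgQ⟩ := exists_prime_orderOf_dvd_card' (G := G₂) N.minFac (Nat.minFac_dvd N)
      set R : Subgroup G₂ := Subgroup.zpowers gR with hRdef
      set Q : Subgroup G₂ := Subgroup.zpowers gQ with hQdef
      have hcR : Nat.card R = r := by rw [hRdef, Nat.card_zpowers, hgR]
      have hcQ : Nat.card Q = N.minFac := by rw [hQdef, Nat.card_zpowers, hgQ]
      -- pull back to G₁
      have pull : ∀ (S : Subgroup G₂), Nat.card S ≠ 1 →
          ∃ P : Subgroup G₁, Nat.card P = p ∧ e (IsoCls P) ≤ IsoCls S := by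
        intro S hS
        obtain ⟨H, hH⟩ := isoCls_exists_rep (e.symm (IsoCls S))
        have hHbot : H ≠ ⊥ := by
          intro hb
          rw [hb] at hH
          have h2 := congrArg e hH
          rw [e.apply_symm_apply, orderIso_map_bot] at h2
          exact hS ((clsCard_isoCls S).symm.trans (clsCard_eq_one_iff.mpr h2.symm))
        have hpH : p ∣ Nat.card H := by
          have hd : Nat.card H ∣ p ^ n := h₁ ▸ Subgroup.card_subgroup_dvd_card H
          obtain ⟨k, hk, hkeq⟩ := (Nat.dvd_prime_pow hp).mp hd
          have hk0 : k ≠ 0 := by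
            intro h0
            rw [h0, pow_zero] at hkeq
            exact hHbot (Subgroup.card_eq_one.mp hkeq)
          rw [hkeq]
          exact dvd_pow_self p hk0
        obtain ⟨P, hPH, hPp⟩ := exists_prime_subgroup_le hp hpH
        refine ⟨P, hPp, ?_⟩
        have : IsoCls P ≤ IsoCls H := ⟨P, H, rfl, rfl, hPH⟩
        have h' := e.map_rel_iff.mpr this
        rwa [hH, e.apply_symm_apply] at h'
      obtain ⟨PR, hPRp, hPRle⟩ := pull R (by rw [hcR]; exact hr.one_lt.ne')
      obtain ⟨PQ, hPQp, hPQle⟩ := pull Q (by rw [hcQ]; exact hq.one_lt.ne')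
      -- the classes of PR and PQ coincide
      have hPP : IsoCls PR = IsoCls PQ :=
        isoCls_eq_iff.mpr ⟨mulEquivOfPrimeCardEq (p := p) hPRp hPQp⟩
      have hc1 : clsCard (e (IsoCls PR)) ∣ r := by
        have := clsCard_dvd_of_le hPRle
        rwa [clsCard_isoCls, hcR] at this
      have hc2 : clsCard (e (IsoCls PR)) ∣ N.minFac := by
        have := clsCard_dvd_of_le (hPP ▸ hPQle)
        rwa [clsCard_isoCls, hcQ] at this
      have hc0 : clsCard (e (IsoCls PR)) ≠ 1 := by
        intro h1
        have := clsCard_eq_one_iff.mp h1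
        rw [← orderIso_map_bot e] at this
        have := e.injective this
        have := congrArg clsCard this
        rw [clsCard_isoCls, clsCard_isoCls, hPRp, Subgroup.card_bot] at this
        exact hp.one_lt.ne' this
      have e1 : clsCard (e (IsoCls PR)) = r := ((Nat.dvd_prime hr).mp hc1).resolve_left hc0
      have e2 : clsCard (e (IsoCls PR)) = N.minFac :=
        ((Nat.dvd_prime hq).mp hc2).resolve_left hc0
      rw [← e1, e2]
    -- N is a power of q := N.minFac
    have hN0 : N ≠ 0 := Nat.card_pos.ne'
    have hNpow : N = N.minFac ^ N.primeFactorsList.length :=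
      Nat.eq_prime_pow_of_unique_prime_dvd hN0 (fun hd hdvd => key _ hd hdvd)
    set m := N.primeFactorsList.length with hm
    refine ⟨N.minFac, hq, ?_⟩
    have hnm : n ≤ m := le_of_isoClasses_orderIso hp hq h₁ hNpow e
    have hmn : m ≤ n := le_of_isoClasses_orderIso hq hp hNpow h₁ e.symm
    have hmn' : m = n := le_antisymm hmn hnm
    rw [← hmn']
    exact hNpow
end

section
/- Let G₁ and G₂ be finite groups such that there is an order isomorphism between the posets Iso(G₁) and Iso(G₂). If G₁ is a CLT-group (for every divisor d of |G₁| there exists a subgroup of G₁ of order d), then G₂ is a CLT-group. -/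
namespace CLTAux

variable {G : Type*} [Group G]

lemma exists_rep (x : IsoClasses G) : ∃ H : Subgroup G, IsoCls H = x :=
  Quotient.exists_rep x

lemma isoCls_eq_iff {H K : Subgroup G} : IsoCls H = IsoCls K ↔ Nonempty (↥H ≃* ↥K) :=
  ⟨fun h => Quotient.exact h, fun h => Quotient.sound h⟩

lemma le_def'' {x y : IsoClasses G} :
    x ≤ y ↔ ∃ H K : Subgroup G, IsoCls H = x ∧ IsoCls K = y ∧ H ≤ K := Iff.rfl

lemma cls_le_of_le {H K : Subgroup G} (h : H ≤ K) : IsoCls H ≤ IsoCls K :=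
  ⟨H, K, rfl, rfl, h⟩

lemma cls_le_of_embedding {H K : Subgroup G} (φ : ↥H →* ↥K) (hφ : Function.Injective φ) :
    IsoCls H ≤ IsoCls K := by
  refine ⟨Subgroup.map K.subtype φ.range, K, ?_, rfl, Subgroup.map_subtype_le _⟩
  refine isoCls_eq_iff.mpr ⟨?_⟩
  exact ((MonoidHom.ofInjective hφ).trans
    (Subgroup.equivMapOfInjective φ.range K.subtype K.subtype_injective)).symm

lemma exists_embedding_of_cls_le {H K : Subgroup G} (h : IsoCls H ≤ IsoCls K) :
    ∃ φ : ↥H →* ↥K, Function.Injective φ := by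
  obtain ⟨H', K', hH, hK, hle⟩ := h
  obtain ⟨e₁⟩ := isoCls_eq_iff.mp hH
  obtain ⟨e₂⟩ := isoCls_eq_iff.mp hK
  exact ⟨(e₂.toMonoidHom.comp (Subgroup.inclusion hle)).comp e₁.symm.toMonoidHom,
    e₂.injective.comp ((Subgroup.inclusion_injective hle).comp e₁.symm.injective)⟩

lemma card_eq_of_cls_eq {H K : Subgroup G} (h : IsoCls H = IsoCls K) :
    Nat.card H = Nat.card K := by
  obtain ⟨e⟩ := isoCls_eq_iff.mp h
  exact Nat.card_congr e.toEquiv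

lemma card_dvd_of_cls_le {H K : Subgroup G} (h : IsoCls H ≤ IsoCls K) :
    Nat.card ↥H ∣ Nat.card ↥K := by
  obtain ⟨H', K', hH, hK, hle⟩ := h
  rw [← card_eq_of_cls_eq hH, ← card_eq_of_cls_eq hK]
  exact Subgroup.card_dvd_of_le hle

lemma cls_eq_of_le_of_card_le [Finite G] {H K : Subgroup G} (h : IsoCls H ≤ IsoCls K)
    (hc : Nat.card ↥K ≤ Nat.card ↥H) : IsoCls H = IsoCls K := by
  obtain ⟨φ, hφ⟩ := exists_embedding_of_cls_le h
  have hcards : Nat.card ↥H = Nat.card ↥K :=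
    le_antisymm (Nat.card_le_card_of_injective φ hφ) hc
  exact isoCls_eq_iff.mpr
    ⟨MulEquiv.ofBijective φ ((Nat.bijective_iff_injective_and_card φ).mpr ⟨hφ, hcards⟩)⟩

end CLTAux

namespace CLTAux

variable {G : Type*} [Group G]

lemma cls_le_trans {x y z : IsoClasses G} (h1 : x ≤ y) (h2 : y ≤ z) : x ≤ z := by
  obtain ⟨H, hH⟩ := exists_rep x
  obtain ⟨K, hK⟩ := exists_rep y
  obtain ⟨L, hL⟩ := exists_rep z
  subst hH hK hL
  obtain ⟨φ, hφ⟩ := exists_embedding_of_cls_le h1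
  obtain ⟨ψ, hψ⟩ := exists_embedding_of_cls_le h2
  exact cls_le_of_embedding (ψ.comp φ) (hψ.comp hφ)

lemma cls_le_antisymm [Finite G] {x y : IsoClasses G} (h1 : x ≤ y) (h2 : y ≤ x) : x = y := by
  obtain ⟨H, hH⟩ := exists_rep x
  obtain ⟨K, hK⟩ := exists_rep y
  subst hH hK
  exact cls_eq_of_le_of_card_le h1 (Nat.le_of_dvd Nat.card_pos (card_dvd_of_cls_le h2))

/-- Order-theoretic bottom. -/
def IsBotC (x : IsoClasses G) : Prop := ∀ y, x ≤ y

lemma isBotC_bot : IsBotC (IsoCls (⊥ : Subgroup G)) := by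
  intro y
  obtain ⟨K, hK⟩ := exists_rep y
  exact hK ▸ cls_le_of_le bot_le

lemma isBotC_cls_iff [Finite G] {H : Subgroup G} : IsBotC (IsoCls H) ↔ H = ⊥ := by
  constructor
  · intro h
    have h1 := card_dvd_of_cls_le (h (IsoCls (⊥ : Subgroup G)))
    rw [Subgroup.card_bot, Nat.dvd_one] at h1
    exact Subgroup.card_eq_one.mp h1
  · rintro rfl; exact isBotC_bot

/-- Order-theoretic atom. -/
def IsAtmC (x : IsoClasses G) : Prop := ¬ IsBotC x ∧ ∀ y, y ≤ x → IsBotC y ∨ y = x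

/-- Order-theoretic "nontrivial group all of whose atoms below are `a`"
(group-side: nontrivial `p`-group where `a` is the class of `Z/p`). -/
def PClC (a x : IsoClasses G) : Prop :=
  IsAtmC a ∧ ¬ IsBotC x ∧ ∀ b, IsAtmC b → b ≤ x → b = a

/-- A strict chain of `k` elements, each a `PClC a` class, all below `x`. -/
def ChainB (a x : IsoClasses G) (k : ℕ) : Prop :=
  ∃ g : Fin k → IsoClasses G,
    (∀ i j, i < j → g i ≤ g j ∧ g i ≠ g j) ∧ ∀ i, PClC a (g i) ∧ g i ≤ x

section Transfer

variable {G₁ G₂ : Type*} [Group G₁] [Group G₂] (f : IsoClasses G₁ ≃o IsoClasses G₂)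

lemma isBotC_map {x : IsoClasses G₁} (h : IsBotC x) : IsBotC (f x) := by
  intro y
  have h2 : f x ≤ f (f.symm y) := f.map_rel_iff.mpr (h (f.symm y))
  rwa [OrderIso.apply_symm_apply] at h2

lemma isAtmC_map {x : IsoClasses G₁} (h : IsAtmC x) : IsAtmC (f x) := by
  constructor
  · intro hb
    have := isBotC_map f.symm hb
    rw [OrderIso.symm_apply_apply] at this
    exact h.1 this
  · intro y hy
    have hy' : f.symm y ≤ x := by
      have := f.symm.map_rel_iff.mpr hy
      rwa [OrderIso.symm_apply_apply] at this
    rcases h.2 _ hy' with hb | he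
    · left
      have := isBotC_map f hb
      rwa [OrderIso.apply_symm_apply] at this
    · right
      rw [← he, OrderIso.apply_symm_apply]

lemma pClC_map {a x : IsoClasses G₁} (h : PClC a x) : PClC (f a) (f x) := by
  refine ⟨isAtmC_map f h.1, ?_, ?_⟩
  · intro hb
    have := isBotC_map f.symm hb
    rw [OrderIso.symm_apply_apply] at this
    exact h.2.1 this
  · intro b hb hle
    have hb' : IsAtmC (f.symm b) := by
      have := isAtmC_map f.symm hb; exact this
    have hle' : f.symm b ≤ x := by
      have := f.symm.map_rel_iff.mpr hle
      rwa [OrderIso.symm_apply_apply] at this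
    have := h.2.2 _ hb' hle'
    calc b = f (f.symm b) := (OrderIso.apply_symm_apply f b).symm
    _ = f a := by rw [this]

lemma chainB_map {a x : IsoClasses G₁} {k : ℕ} (h : ChainB a x k) :
    ChainB (f a) (f x) k := by
  obtain ⟨g, hmono, hmem⟩ := h
  refine ⟨fun i => f (g i), fun i j hij => ?_, fun i => ?_⟩
  · exact ⟨f.map_rel_iff.mpr (hmono i j hij).1,
      fun he => (hmono i j hij).2 (f.injective he)⟩
  · exact ⟨pClC_map f (hmem i).1, f.map_rel_iff.mpr (hmem i).2⟩

end Transfer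

end CLTAux

namespace CLTAux

variable {G : Type*} [Group G]

lemma card_map_subtype' {H : Subgroup G} (K : Subgroup ↥H) :
    Nat.card ↥(K.map H.subtype) = Nat.card ↥K :=
  (Nat.card_congr (Subgroup.equivMapOfInjective K H.subtype H.subtype_injective).toEquiv).symm

/-- A class of prime cardinality is an atom. -/
lemma isAtmC_of_prime_card [Finite G] {p : ℕ} (hp : p.Prime) {A : Subgroup G}
    (hA : Nat.card A = p) : IsAtmC (IsoCls A) := by
  constructor
  · intro h
    rw [isBotC_cls_iff] at h
    rw [h, Subgroup.card_bot] at hA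
    exact hp.one_lt.ne hA
  · intro y hy
    obtain ⟨K, hK⟩ := exists_rep y
    subst hK
    have hdvd : Nat.card ↥K ∣ p := hA ▸ card_dvd_of_cls_le hy
    rcases (Nat.Prime.eq_one_or_self_of_dvd hp _ hdvd) with h1 | h1
    · left
      rw [isBotC_cls_iff]
      exact Subgroup.card_eq_one.mp h1
    · right
      exact cls_eq_of_le_of_card_le hy (by rw [h1, hA])

/-- Cauchy: a subgroup of prime order below a given class. -/
lemma exists_prime_card_cls_le [Finite G] {p : ℕ} (hp : p.Prime) {H : Subgroup G}
    (hdvd : p ∣ Nat.card H) :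
    ∃ A : Subgroup G, Nat.card A = p ∧ IsoCls A ≤ IsoCls H := by
  haveI : Fact p.Prime := ⟨hp⟩
  obtain ⟨x, hx⟩ := exists_prime_orderOf_dvd_card' (G := ↥H) p hdvd
  refine ⟨(Subgroup.zpowers x).map H.subtype, ?_, ?_⟩
  · rw [card_map_subtype', Nat.card_zpowers, hx]
  · exact cls_le_of_le (Subgroup.map_subtype_le _)

/-- Any two subgroups of the same prime cardinality have the same class. -/
lemma cls_eq_of_prime_card [Finite G] {p : ℕ} (hp : p.Prime) {A B : Subgroup G}
    (hA : Nat.card A = p) (hB : Nat.card B = p) : IsoCls A = IsoCls B := by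
  haveI : Fact p.Prime := ⟨hp⟩
  haveI : IsCyclic ↥A := isCyclic_of_prime_card hA
  haveI : IsCyclic ↥B := isCyclic_of_prime_card hB
  exact isoCls_eq_iff.mpr ⟨mulEquivOfCyclicCardEq (hA.trans hB.symm)⟩

/-- Every atom is the class of a subgroup of prime cardinality. -/
lemma isAtmC_elim [Finite G] {x : IsoClasses G} (h : IsAtmC x) :
    ∃ p : ℕ, p.Prime ∧ ∃ A : Subgroup G, Nat.card A = p ∧ IsoCls A = x := by
  obtain ⟨H, hH⟩ := exists_rep x
  subst hH
  have hne : Nat.card ↥H ≠ 1 := by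
    intro h1
    exact h.1 (isBotC_cls_iff.mpr (Subgroup.card_eq_one.mp h1)) 
  obtain ⟨p, hp, hdvd⟩ := Nat.exists_prime_and_dvd hne
  obtain ⟨A, hA, hle⟩ := exists_prime_card_cls_le hp hdvd
  rcases h.2 _ hle with hb | he
  · exfalso
    rw [isBotC_cls_iff] at hb
    rw [hb, Subgroup.card_bot] at hA
    exact hp.one_lt.ne hA
  · exact ⟨p, hp, A, hA, he⟩

/-- A nontrivial `p`-power-order class is a `PClC` for the `Z/p` atom. -/
lemma pClC_of_ppow [Finite G] {p : ℕ} (hp : p.Prime) {A K : Subgroup G}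
    (hA : Nat.card A = p) {m : ℕ} (hm : 1 ≤ m) (hK : Nat.card K = p ^ m) :
    PClC (IsoCls A) (IsoCls K) := by
  refine ⟨isAtmC_of_prime_card hp hA, ?_, ?_⟩
  · intro hb
    rw [isBotC_cls_iff] at hb
    rw [hb, Subgroup.card_bot] at hK
    exact Nat.lt_irrefl 1 (by
      calc 1 < p := hp.one_lt
      _ ≤ p ^ m := Nat.le_self_pow (by omega) p
      _ = 1 := hK.symm)
  · intro b hb hle
    obtain ⟨q, hq, B, hBcard, hBcls⟩ := isAtmC_elim hb
    subst hBcls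
    have hdvd : q ∣ p ^ m := by
      have := card_dvd_of_cls_le hle
      rwa [hBcard, hK] at this
    have hqp : q = p := by
      have := hq.dvd_of_dvd_pow (n := m) hdvd
      exact (Nat.prime_dvd_prime_iff_eq hq hp).mp this
    exact cls_eq_of_prime_card hq hBcard (by rw [hA, hqp])

/-- Conversely, a `PClC` class is a nontrivial `p`-group. -/
lemma pClC_elim [Finite G] {p : ℕ} (hp : p.Prime) {A K : Subgroup G}
    (hA : Nat.card A = p) (h : PClC (IsoCls A) (IsoCls K)) :
    ∃ m : ℕ, 1 ≤ m ∧ Nat.card K = p ^ m := by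
  have hne : Nat.card ↥K ≠ 1 := by
    intro h1
    exact h.2.1 (isBotC_cls_iff.mpr (Subgroup.card_eq_one.mp h1))
  have hq : ∀ {q : ℕ}, q.Prime → q ∣ Nat.card ↥K → q = p := by
    intro q hq hdvd
    obtain ⟨B, hBcard, hle⟩ := exists_prime_card_cls_le hq hdvd
    have hBa := h.2.2 _ (isAtmC_of_prime_card hq hBcard) hle
    have := card_eq_of_cls_eq hBa
    rw [hBcard, hA] at this
    exact this
  have := Nat.eq_prime_pow_of_unique_prime_dvd (Nat.card_pos (α := ↥K)).ne' hq
  refine ⟨_, ?_, this⟩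
  by_contra hlen
  rw [Nat.lt_one_iff.mp (Nat.not_le.mp hlen), pow_zero] at this
  exact hne this

end CLTAux

namespace CLTAux

variable {G : Type*} [Group G]

/-- Upper bound: a `ChainB` of length `k` forces `p ^ k ∣ |H|`. -/
lemma chainB_pow_dvd [Finite G] {p : ℕ} (hp : p.Prime) {A H : Subgroup G}
    (hA : Nat.card A = p) {k : ℕ} (h : ChainB (IsoCls A) (IsoCls H) k) :
    p ^ k ∣ Nat.card H := by
  obtain ⟨g, hmono, hmem⟩ := h
  rcases Nat.eq_zero_or_pos k with rfl | hk
  · simpa using one_dvd _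
  have hrep : ∀ i : Fin k, ∃ K : Subgroup G, IsoCls K = g i := fun i => exists_rep (g i)
  choose K hK using hrep
  have hpow : ∀ i, ∃ m, 1 ≤ m ∧ Nat.card (K i) = p ^ m := by
    intro i
    have := (hmem i).1
    rw [← hK i] at this
    exact pClC_elim hp hA this
  have main : ∀ j : ℕ, ∀ hj : j < k, p ^ (j+1) ∣ Nat.card (K ⟨j, hj⟩) := by
    intro j
    induction j with
    | zero =>
      intro hj
      obtain ⟨m, hm, hcard⟩ := hpow ⟨0, hj⟩
      rw [hcard, pow_one]
      exact dvd_pow_self p (by omega)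
    | succ j ih =>
      intro hj
      have hj' : j < k := by omega
      have hprev := ih hj'
      obtain ⟨m, hm, hcard⟩ := hpow ⟨j, hj'⟩
      obtain ⟨m', hm', hcard'⟩ := hpow ⟨j+1, hj⟩
      have hlt : (⟨j, hj'⟩ : Fin k) < ⟨j+1, hj⟩ := by simp [Fin.lt_def]
      have hle' : IsoCls (K ⟨j, hj'⟩) ≤ IsoCls (K ⟨j+1, hj⟩) := by
        rw [hK _, hK _]; exact (hmono _ _ hlt).1
      have hdvd : Nat.card (K ⟨j, hj'⟩) ∣ Nat.card (K ⟨j+1, hj⟩) :=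
        card_dvd_of_cls_le hle'
      have hne : Nat.card (K ⟨j, hj'⟩) ≠ Nat.card (K ⟨j+1, hj⟩) := by
        intro he
        apply (hmono _ _ hlt).2
        rw [← hK _, ← hK _]
        exact cls_eq_of_le_of_card_le hle' (le_of_eq he.symm)
      rw [hcard, hcard'] at hdvd hne
      have hmm : m < m' := by
        have hle'' := (Nat.pow_dvd_pow_iff_le_right hp.one_lt).mp hdvd
        rcases lt_or_eq_of_le hle'' with h' | h'
        · exact h'
        · exact absurd (by rw [h']) hne
      have hjm : j + 1 ≤ m :=
        (Nat.pow_dvd_pow_iff_le_right hp.one_lt).mp (hcard ▸ hprev)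
      rw [hcard']
      exact pow_dvd_pow p (by omega)
  have hklast : k - 1 < k := by omega
  have hlast : p ^ k ∣ Nat.card (K ⟨k-1, hklast⟩) := by
    have := main (k-1) hklast
    have hke : k - 1 + 1 = k := by omega
    rwa [hke] at this
  refine hlast.trans ?_
  have := (hmem ⟨k-1, hklast⟩).2
  rw [← hK _] at this
  exact card_dvd_of_cls_le this

/-- A nested chain of subgroups of orders `p^0, …, p^k`. -/
lemma exists_nested_chain (X : Type*) [Group X] [Finite X] {p : ℕ} (hp : p.Prime) :
    ∀ k : ℕ, p ^ k ∣ Nat.card X →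
      ∃ Q : ℕ → Subgroup X, (∀ i, Q i ≤ Q (i+1)) ∧ ∀ i, i ≤ k → Nat.card (Q i) = p ^ i := by
  haveI : Fact p.Prime := ⟨hp⟩
  intro k
  induction k with
  | zero =>
    intro _
    refine ⟨fun _ => ⊥, fun i => le_refl _, fun i hi => ?_⟩
    interval_cases i
    simp [Subgroup.card_bot]
  | succ k ih =>
    intro hdvd
    obtain ⟨Q, hQmono, hQcard⟩ := ih ((pow_dvd_pow p (Nat.le_succ k)).trans hdvd)
    obtain ⟨K, hKcard, hKle⟩ :=
      Sylow.exists_subgroup_card_pow_succ hdvd (hQcard k le_rfl)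
    refine ⟨fun i => if i ≤ k then Q i else K, fun i => ?_, fun i hi => ?_⟩
    · by_cases h1 : i ≤ k
      · by_cases h2 : i + 1 ≤ k
        · simpa [h1, h2] using hQmono i
        · have : i = k := by omega
          subst this
          simpa [h1, h2] using hKle
      · have h2 : ¬ (i + 1 ≤ k) := by omega
        simp [h1, h2]
    · by_cases h1 : i ≤ k
      · simpa [h1] using hQcard i h1
      · have : i = k + 1 := by omega
        subst this
        simpa [h1] using hKcard

/-- Lower bound: `p ^ k ∣ |H|` yields a `ChainB` of length `k`. -/
lemma exists_chainB [Finite G] {p : ℕ} (hp : p.Prime) {A H : Subgroup G}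
    (hA : Nat.card A = p) {k : ℕ} (hdvd : p ^ k ∣ Nat.card H) :
    ChainB (IsoCls A) (IsoCls H) k := by
  obtain ⟨Q, hQmono, hQcard⟩ := exists_nested_chain ↥H hp k hdvd
  have hQmono' : ∀ i j : ℕ, i ≤ j → Q i ≤ Q j := fun i j hij =>
    monotone_nat_of_le_succ hQmono hij
  refine ⟨fun i => IsoCls ((Q (i.val + 1)).map H.subtype), fun i j hij => ?_, fun i => ?_⟩
  · constructor
    · exact cls_le_of_le (Subgroup.map_mono (hQmono' _ _ (by omega)))
    · intro he
      have := card_eq_of_cls_eq he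
      rw [card_map_subtype', card_map_subtype', hQcard _ (by omega), hQcard _ (by omega)] at this
      have := Nat.pow_right_injective hp.two_le this
      omega
  · constructor
    · refine pClC_of_ppow hp hA (m := i.val + 1) (by omega) ?_
      rw [card_map_subtype', hQcard _ (by omega)]
    · exact cls_le_of_le (Subgroup.map_subtype_le _)

end CLTAux

namespace CLTAux

lemma coprime_prod_of_ne {s : Finset ℕ} (qf k : ℕ → ℕ) {r : ℕ} (hr : r.Prime)
    (hq : ∀ p ∈ s, (qf p).Prime) (hne : ∀ p ∈ s, qf p ≠ r) :
    Nat.Coprime r (∏ p ∈ s, qf p ^ k p) := by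
  refine Nat.Coprime.prod_right fun p hp => Nat.Coprime.pow_right _ ?_
  exact (Nat.coprime_primes hr (hq p hp)).mpr (fun he => hne p hp he.symm)

lemma prod_pp_dvd {s : Finset ℕ} (qf k : ℕ → ℕ) (n : ℕ)
    (hq : ∀ p ∈ s, (qf p).Prime)
    (hinj : ∀ p ∈ s, ∀ p' ∈ s, qf p = qf p' → p = p')
    (hdvd : ∀ p ∈ s, qf p ^ k p ∣ n) :
    (∏ p ∈ s, qf p ^ k p) ∣ n := by
  classical
  induction s using Finset.induction_on with
  | empty => simpa using one_dvd n
  | @insert a t ha ih =>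
    rw [Finset.prod_insert ha]
    have hcop : Nat.Coprime (qf a) (∏ p ∈ t, qf p ^ k p) := by
      refine coprime_prod_of_ne qf k (hq a (Finset.mem_insert_self a t))
        (fun p hp => hq p (Finset.mem_insert_of_mem hp)) (fun p hp he => ?_)
      have := hinj p (Finset.mem_insert_of_mem hp) a (Finset.mem_insert_self a t) he
      exact ha (this ▸ hp)
    refine Nat.Coprime.mul_dvd_of_dvd_of_dvd (Nat.Coprime.pow_left _ hcop)
      (hdvd a (Finset.mem_insert_self a t)) ?_
    exact ih (fun p hp => hq p (Finset.mem_insert_of_mem hp))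
      (fun p hp p' hp' => hinj p (Finset.mem_insert_of_mem hp) p' (Finset.mem_insert_of_mem hp'))
      (fun p hp => hdvd p (Finset.mem_insert_of_mem hp))

lemma le_of_pow_dvd_prod_pp {s : Finset ℕ} (qf k : ℕ → ℕ) {r j : ℕ}
    (hq : ∀ p ∈ s, (qf p).Prime)
    (hinj : ∀ p ∈ s, ∀ p' ∈ s, qf p = qf p' → p = p')
    (hr : r ∈ s)
    (h : qf r ^ j ∣ ∏ p ∈ s, qf p ^ k p) : j ≤ k r := by
  classical
  rw [← Finset.mul_prod_erase s _ hr] at h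
  have hcop : Nat.Coprime (qf r) (∏ p ∈ s.erase r, qf p ^ k p) := by
    refine coprime_prod_of_ne qf k (hq r hr)
      (fun p hp => hq p (Finset.mem_of_mem_erase hp)) (fun p hp he => ?_)
    exact (Finset.ne_of_mem_erase hp)
      (hinj p (Finset.mem_of_mem_erase hp) r hr he)
  have := (Nat.Coprime.pow_left j hcop).dvd_of_dvd_mul_right h
  exact (Nat.pow_dvd_pow_iff_le_right (hq r hr).one_lt).mp this

end CLTAux

open CLTAux

/-- If `IsoClasses G₁` and `IsoClasses G₂` are order isomorphic and
`G₁` is a CLT-group (it has a subgroup of every order dividing `|G₁|`), then `G₂` is a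
CLT-group. -/
theorem clt_of_isoClasses_orderIso
    (G₁ : Type*) [Group G₁] [Finite G₁] (G₂ : Type*) [Group G₂] [Finite G₂]
    (h : Nonempty (IsoClasses G₁ ≃o IsoClasses G₂))
    (hclt : ∀ d : ℕ, d ∣ Nat.card G₁ → ∃ H : Subgroup G₁, Nat.card H = d) :
    ∀ d : ℕ, d ∣ Nat.card G₂ → ∃ H : Subgroup G₂, Nat.card H = d := by
  classical
  obtain ⟨f⟩ := h
  intro d hd
  have hn₂ : Nat.card G₂ ≠ 0 := Nat.card_pos.ne'
  have hd0 : d ≠ 0 := fun h0 => hn₂ (Nat.eq_zero_of_zero_dvd (h0 ▸ hd))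
  -- Choice of an atom pair for each prime dividing |G₂|
  have key : ∀ p : ℕ, ∃ (qp : ℕ) (Ap : Subgroup G₂) (Bp : Subgroup G₁),
      p.Prime → p ∣ Nat.card G₂ →
        qp.Prime ∧ Nat.card Ap = p ∧ Nat.card Bp = qp ∧
          IsoCls Bp = f.symm (IsoCls Ap) := by
    intro p
    by_cases hp : p.Prime ∧ p ∣ Nat.card G₂
    · obtain ⟨hp1, hp2⟩ := hp
      haveI : Fact p.Prime := ⟨hp1⟩
      obtain ⟨Ap, hAp⟩ := Sylow.exists_subgroup_card_pow_prime (G := G₂) p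
        (n := 1) (by simpa using hp2)
      rw [pow_one] at hAp
      have hatm : IsAtmC (IsoCls Ap) := isAtmC_of_prime_card hp1 hAp
      have hatm' : IsAtmC (f.symm (IsoCls Ap)) := isAtmC_map f.symm hatm
      obtain ⟨qp, hq, Bp, hBcard, hBcls⟩ := isAtmC_elim hatm'
      exact ⟨qp, Ap, Bp, fun _ _ => ⟨hq, hAp, hBcard, hBcls⟩⟩
    · exact ⟨1, ⊥, ⊥, fun h1 h2 => absurd ⟨h1, h2⟩ hp⟩
  choose q A B key using key
  -- transfer of divisibility from G₂ to G₁
  have Ta : ∀ p : ℕ, ∀ (hp1 : p.Prime) (hp2 : p ∣ Nat.card G₂),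
      ∀ (H₂ : Subgroup G₂) (H₁ : Subgroup G₁), IsoCls H₁ = f.symm (IsoCls H₂) →
      ∀ j : ℕ, p ^ j ∣ Nat.card H₂ → q p ^ j ∣ Nat.card H₁ := by
    intro p hp1 hp2 H₂ H₁ hH₁ j hdvd
    obtain ⟨hqprime, hAcard, hBcard, hBcls⟩ := key p hp1 hp2
    have hch : ChainB (IsoCls (A p)) (IsoCls H₂) j := exists_chainB hp1 hAcard hdvd
    have hch' := chainB_map f.symm hch
    rw [← hBcls, ← hH₁] at hch'
    exact chainB_pow_dvd hqprime hBcard hch'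
  -- transfer of divisibility from G₁ to G₂
  have Tb : ∀ p : ℕ, ∀ (hp1 : p.Prime) (hp2 : p ∣ Nat.card G₂),
      ∀ (H₁ : Subgroup G₁) (H₂ : Subgroup G₂), IsoCls H₂ = f (IsoCls H₁) →
      ∀ j : ℕ, q p ^ j ∣ Nat.card H₁ → p ^ j ∣ Nat.card H₂ := by
    intro p hp1 hp2 H₁ H₂ hH₂ j hdvd
    obtain ⟨hqprime, hAcard, hBcard, hBcls⟩ := key p hp1 hp2
    have hch : ChainB (IsoCls (B p)) (IsoCls H₁) j := exists_chainB hqprime hBcard hdvd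
    have hch' := chainB_map f hch
    have hfB : f (IsoCls (B p)) = IsoCls (A p) := by
      rw [hBcls, OrderIso.apply_symm_apply]
    rw [hfB, ← hH₂] at hch'
    exact chainB_pow_dvd hp1 hAcard hch'
  -- injectivity of the prime correspondence
  have hinj : ∀ p : ℕ, p.Prime → p ∣ Nat.card G₂ → ∀ p' : ℕ, p'.Prime → p' ∣ Nat.card G₂ →
      q p = q p' → p = p' := by
    intro p hp1 hp2 p' hp1' hp2' hqq
    obtain ⟨hqprime, hAcard, hBcard, hBcls⟩ := key p hp1 hp2
    obtain ⟨hqprime', hAcard', hBcard', hBcls'⟩ := key p' hp1' hp2'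
    have hB : IsoCls (B p) = IsoCls (B p') :=
      cls_eq_of_prime_card hqprime hBcard (by rw [hBcard', hqq])
    have hA : IsoCls (A p) = IsoCls (A p') := by
      have := hB
      rw [hBcls, hBcls'] at this
      exact f.symm.injective this
    have := card_eq_of_cls_eq hA
    rw [hAcard, hAcard'] at this
    exact this
  -- step 1 : q p ^ (v_p |G₂|) divides |G₁|
  have hstep1 : ∀ p : ℕ, p.Prime → p ∣ Nat.card G₂ →
      q p ^ ((Nat.card G₂).factorization p) ∣ Nat.card G₁ := by
    intro p hp1 hp2
    obtain ⟨H₁, hH₁⟩ := exists_rep (f.symm (IsoCls (⊤ : Subgroup G₂)))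
    have hdvd2 : p ^ ((Nat.card G₂).factorization p) ∣ Nat.card (⊤ : Subgroup G₂) := by
      rw [Subgroup.card_top]
      exact Nat.ordProj_dvd _ p
    have := Ta p hp1 hp2 ⊤ H₁ hH₁ _ hdvd2
    exact this.trans (Subgroup.card_subgroup_dvd_card H₁)
  set s : Finset ℕ := d.primeFactors with hs
  have hsprime : ∀ p ∈ s, p.Prime := fun p hp => Nat.prime_of_mem_primeFactors hp
  have hsdvd₂ : ∀ p ∈ s, p ∣ Nat.card G₂ := fun p hp =>
    (Nat.dvd_of_mem_primeFactors hp).trans hd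
  have hsinj : ∀ p ∈ s, ∀ p' ∈ s, q p = q p' → p = p' := fun p hp p' hp' =>
    hinj p (hsprime p hp) (hsdvd₂ p hp) p' (hsprime p' hp') (hsdvd₂ p' hp')
  have hsqprime : ∀ p ∈ s, (q p).Prime := fun p hp =>
    (key p (hsprime p hp) (hsdvd₂ p hp)).1
  -- the transported divisor d'
  set d' : ℕ := ∏ p ∈ s, q p ^ d.factorization p with hd'
  have hd'dvd : d' ∣ Nat.card G₁ := by
    refine prod_pp_dvd _ _ _ hsqprime hsinj (fun p hp => ?_)
    have hle : d.factorization p ≤ (Nat.card G₂).factorization p :=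
      Finsupp.le_def.mp ((Nat.factorization_le_iff_dvd hd0 hn₂).mpr hd) p
    exact (pow_dvd_pow _ hle).trans (hstep1 p (hsprime p hp) (hsdvd₂ p hp))
  obtain ⟨H₁, hH₁card⟩ := hclt d' hd'dvd
  obtain ⟨H₂, hH₂⟩ := exists_rep (f (IsoCls H₁))
  refine ⟨H₂, ?_⟩
  have hH₂n₂ : Nat.card H₂ ∣ Nat.card G₂ := Subgroup.card_subgroup_dvd_card H₂
  have hH₂0 : Nat.card H₂ ≠ 0 := Nat.card_pos.ne'
  -- (i) d ∣ |H₂|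
  have hi : d ∣ Nat.card H₂ := by
    have hdeq : d = ∏ p ∈ s, p ^ d.factorization p := by
      conv_lhs => rw [← Nat.factorization_prod_pow_eq_self hd0]
      rfl
    rw [hdeq]
    refine prod_pp_dvd id _ _ hsprime (fun p _ p' _ hpp => hpp) (fun p hp => ?_)
    have hterm : q p ^ d.factorization p ∣ d' :=
      Finset.dvd_prod_of_mem (fun p => q p ^ d.factorization p) hp
    rw [← hH₁card] at hterm
    exact Tb p (hsprime p hp) (hsdvd₂ p hp) H₁ H₂ hH₂ _ hterm
  -- (ii) |H₂| ∣ d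
  have hii : Nat.card H₂ ∣ d := by
    rw [← Nat.factorization_le_iff_dvd hH₂0 hd0]
    rw [Finsupp.le_def]
    intro r
    by_cases hr0 : (Nat.card H₂).factorization r = 0
    · rw [hr0]; exact Nat.zero_le _
    · have hrprime : r.Prime := by
        by_contra hnp
        exact hr0 (Nat.factorization_eq_zero_of_not_prime _ hnp)
      have hrdvd : r ∣ Nat.card H₂ := by
        by_contra hnd
        exact hr0 (Nat.factorization_eq_zero_of_not_dvd hnd)
      have hrn₂ : r ∣ Nat.card G₂ := hrdvd.trans hH₂n₂
      set j := (Nat.card H₂).factorization r with hj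
      have hrj : r ^ j ∣ Nat.card H₂ := Nat.ordProj_dvd _ r
      have hH₁cls : IsoCls H₁ = f.symm (IsoCls H₂) := by
        rw [hH₂, OrderIso.symm_apply_apply]
      have hqj : q r ^ j ∣ d' := by
        rw [← hH₁card]
        exact Ta r hrprime hrn₂ H₂ H₁ hH₁cls _ hrj
      by_cases hrs : r ∈ s
      · exact le_of_pow_dvd_prod_pp _ _ hsqprime hsinj hrs hqj
      · exfalso
        have hqr_prime : (q r).Prime := (key r hrprime hrn₂).1
        have hj1 : 1 ≤ j := Nat.Prime.factorization_pos_of_dvd hrprime hH₂0 hrdvd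
        have hqrd' : q r ∣ d' := (dvd_pow_self (q r) (by omega : j ≠ 0)).trans hqj
        have hcop : Nat.Coprime (q r) d' := by
          refine coprime_prod_of_ne _ _ hqr_prime hsqprime (fun p hp he => ?_)
          exact hrs ((hinj p (hsprime p hp) (hsdvd₂ p hp) r hrprime hrn₂ he) ▸ hp)
        exact hqr_prime.one_lt.ne' (hcop.eq_one_of_dvd hqrd')
  exact Nat.dvd_antisymm hii hi
end

section
/- Let n ≥ 2 be an integer that is not square-free. Then there exist two finite groups G₁ and G₂, both of order n, such that G₁ and G₂ are not isomorphic but the posets Iso(G₁) and Iso(G₂) are order isomorphic. -/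
open Subgroup

def CardDeterminesSubgroups (G : Type*) [Group G] : Prop :=
  ∀ H K : Subgroup G, Nat.card H = Nat.card K → Nonempty (H ≃* K)

theorem CommGroup.exists_subgroup_card_eq_of_dvd {G : Type*} [CommGroup G] [Finite G] {d : ℕ}
    (hd : d ∣ Nat.card G) : ∃ H : Subgroup G, Nat.card H = d := by
  induction d using Nat.strong_induction_on generalizing G with
  | _ d ih =>
  rcases eq_or_ne d 1 with rfl | hd1
  · exact ⟨⊥, card_bot⟩
  have hd0 : d ≠ 0 := by rintro rfl; simp [Nat.card_pos.ne'] at hd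
  set q := d.minFac
  have hq : q.Prime := Nat.minFac_prime hd1
  have : Fact q.Prime := ⟨hq⟩
  obtain ⟨g, hg⟩ := exists_prime_orderOf_dvd_card' q (d.minFac_dvd.trans hd)
  set N := zpowers g
  have hN : Nat.card N = q := by rw [Nat.card_zpowers, hg]
  have hdq : d / q * q = d := Nat.div_mul_cancel d.minFac_dvd
  obtain ⟨H, hH⟩ := ih (d / q) (Nat.div_lt_self (by omega) hq.one_lt) (G := G ⧸ N) <| by
    rw [← hdq, card_eq_card_quotient_mul_card_subgroup N, hN] at hd
    exact Nat.dvd_of_mul_dvd_mul_right hq.pos hd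
  refine ⟨H.comap (QuotientGroup.mk' N), ?_⟩
  rw [← hdq, ← hH, ← hN, mul_comm]
  exact QuotientGroup.card_preimage_mk N H

theorem IsCyclic.cardDeterminesSubgroups {G : Type*} [Group G] [IsCyclic G] :
    CardDeterminesSubgroups G :=
  fun _ _ h => ⟨mulEquivOfCyclicCardEq h⟩

theorem nonempty_mulEquiv_of_exponent_dvd_prime {p : ℕ} [Fact p.Prime] {A B : Type*}
    [CommGroup A] [CommGroup B] [Finite A] [Finite B] (hA : Monoid.exponent A ∣ p)
    (hB : Monoid.exponent B ∣ p) (h : Nat.card A = Nat.card B) : Nonempty (A ≃* B) := by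
  have := AddCommGroup.zmodModule (G := Additive A)
    (AddMonoid.exponent_dvd_iff_forall_nsmul_eq_zero.mp hA)
  have := AddCommGroup.zmodModule (G := Additive B)
    (AddMonoid.exponent_dvd_iff_forall_nsmul_eq_zero.mp hB)
  have : Module.Finite (ZMod p) (Additive A) := Module.Finite.of_finite
  have : Module.Finite (ZMod p) (Additive B) := Module.Finite.of_finite
  have hrank : Module.finrank (ZMod p) (Additive A) = Module.finrank (ZMod p) (Additive B) := by
    have hA' := Module.natCard_eq_pow_finrank (K := ZMod p) (V := Additive A)
    have hB' := Module.natCard_eq_pow_finrank (K := ZMod p) (V := Additive B)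
    rw [Nat.card_zmod] at hA' hB'
    exact Nat.pow_right_injective (Fact.out : p.Prime).two_le (hA'.symm.trans (h.trans hB'))
  obtain ⟨e⟩ := FiniteDimensional.nonempty_linearEquiv_of_finrank_eq hrank
  exact ⟨MulEquiv.toAdditive.symm e.toAddEquiv⟩

theorem cardDeterminesSubgroups_of_exponent_dvd_prime {p : ℕ} [Fact p.Prime] {G : Type*}
    [CommGroup G] [Finite G] (hG : Monoid.exponent G ∣ p) : CardDeterminesSubgroups G :=
  fun H K h => nonempty_mulEquiv_of_exponent_dvd_prime
    ((Monoid.exponent_dvd_of_monoidHom H.subtype H.subtype_injective).trans hG)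
    ((Monoid.exponent_dvd_of_monoidHom K.subtype K.subtype_injective).trans hG) h

section CoprimeProd

variable {A B : Type*} [Group A] [Group B]

theorem Subgroup.mk_one_mem_of_mk_mem_of_coprime (hco : (Nat.card A).Coprime (Nat.card B))
    {H : Subgroup (A × B)} {a : A} {b : B} (hab : (a, b) ∈ H) : (a, 1) ∈ H := by
  -- `(a, b) ^ s = (a, 1)` for `s ≡ 1 [MOD |A|]` and `s ≡ 0 [MOD |B|]`.
  obtain ⟨s, hsA, hsB⟩ := Nat.chineseRemainder hco 1 0
  have has : a ^ s = a := by
    rw [← pow_mod_natCard, show s % _ = 1 % _ from hsA, pow_mod_natCard, pow_one]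
  have hbs : b ^ s = 1 := by
    rw [← pow_mod_natCard, show s % _ = 0 % _ from hsB, Nat.zero_mod, pow_zero]
  simpa [has, hbs] using H.pow_mem hab s

theorem Subgroup.eq_prod_map_fst_map_snd_of_coprime (hco : (Nat.card A).Coprime (Nat.card B))
    (H : Subgroup (A × B)) :
    H = (H.map (MonoidHom.fst A B)).prod (H.map (MonoidHom.snd A B)) := by
  refine le_antisymm (fun x hx => ⟨mem_map_of_mem _ hx, mem_map_of_mem _ hx⟩) ?_
  rintro ⟨a, b⟩ ⟨⟨⟨a, b'⟩, ha, rfl⟩, ⟨⟨a', b⟩, hb, rfl⟩⟩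
  have h₁ := mk_one_mem_of_mk_mem_of_coprime hco ha
  have h₂ := mk_one_mem_of_mk_mem_of_coprime hco hb
  simpa using H.mul_mem h₁ (H.mul_mem (H.inv_mem h₂) hb)

noncomputable def Subgroup.equivMapFstProdMapSnd (hco : (Nat.card A).Coprime (Nat.card B))
    (H : Subgroup (A × B)) : H ≃* H.map (MonoidHom.fst A B) × H.map (MonoidHom.snd A B) :=
  (MulEquiv.subgroupCongr (H.eq_prod_map_fst_map_snd_of_coprime hco)).trans (prodEquiv _ _)

theorem Subgroup.card_map_fst_of_coprime (hco : (Nat.card A).Coprime (Nat.card B))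
    (H : Subgroup (A × B)) :
    Nat.card (H.map (MonoidHom.fst A B)) = (Nat.card H).gcd (Nat.card A) := by
  have hsnd : (Nat.card (H.map (MonoidHom.snd A B))).Coprime (Nat.card A) :=
    hco.symm.coprime_dvd_left (card_subgroup_dvd_card _)
  rw [Nat.card_congr (H.equivMapFstProdMapSnd hco).toEquiv, Nat.card_prod,
    hsnd.gcd_mul_right_cancel, Nat.gcd_eq_left (card_subgroup_dvd_card _)]

theorem Subgroup.card_map_snd_of_coprime (hco : (Nat.card A).Coprime (Nat.card B))
    (H : Subgroup (A × B)) :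
    Nat.card (H.map (MonoidHom.snd A B)) = (Nat.card H).gcd (Nat.card B) := by
  have hfst : (Nat.card (H.map (MonoidHom.fst A B))).Coprime (Nat.card B) :=
    hco.coprime_dvd_left (card_subgroup_dvd_card _)
  rw [Nat.card_congr (H.equivMapFstProdMapSnd hco).toEquiv, Nat.card_prod,
    hfst.gcd_mul_left_cancel, Nat.gcd_eq_left (card_subgroup_dvd_card _)]

theorem CardDeterminesSubgroups.prod (hco : (Nat.card A).Coprime (Nat.card B))
    (hA : CardDeterminesSubgroups A) (hB : CardDeterminesSubgroups B) :
    CardDeterminesSubgroups (A × B) := by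
  intro H K h
  obtain ⟨e₁⟩ := hA (H.map (MonoidHom.fst A B)) (K.map (MonoidHom.fst A B)) <| by
    rw [card_map_fst_of_coprime hco, card_map_fst_of_coprime hco, h]
  obtain ⟨e₂⟩ := hB (H.map (MonoidHom.snd A B)) (K.map (MonoidHom.snd A B)) <| by
    rw [card_map_snd_of_coprime hco, card_map_snd_of_coprime hco, h]
  exact ⟨(H.equivMapFstProdMapSnd hco).trans
    ((e₁.prodCongr e₂).trans (K.equivMapFstProdMapSnd hco).symm)⟩

end CoprimeProd

noncomputable def OrderIso.ofInjectiveOfRangeEq {α β γ : Type*} [LE α] [LE β]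
    (r : γ → γ → Prop) {f : α → γ} {g : β → γ} (hf : Function.Injective f)
    (hg : Function.Injective g) (hfg : Set.range f = Set.range g)
    (hfr : ∀ x y, x ≤ y ↔ r (f x) (f y)) (hgr : ∀ x y, x ≤ y ↔ r (g x) (g y)) :
    α ≃o β where
  toEquiv :=
    (Equiv.ofInjective f hf).trans ((Equiv.setCongr hfg).trans (Equiv.ofInjective g hg).symm)
  map_rel_iff' {x y} := by
    simp only [Equiv.trans_apply, hgr, Equiv.apply_ofInjective_symm, Equiv.setCongr_apply,
      Equiv.ofInjective_apply, hfr]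

namespace IsoClasses

noncomputable def card {G : Type*} [Group G] : IsoClasses G → ℕ :=
  Quotient.lift (fun H : Subgroup G => Nat.card H) fun _ _ ⟨e⟩ => Nat.card_congr e.toEquiv

theorem card_injective {G : Type*} [Group G] (hG : CardDeterminesSubgroups G) :
    Function.Injective (card (G := G)) := by
  rintro ⟨H⟩ ⟨K⟩ h
  exact Quotient.sound (hG H K h)

variable {G : Type*} [CommGroup G] [Finite G]

theorem le_iff_card_dvd (hG : CardDeterminesSubgroups G) (x y : IsoClasses G) :
    x ≤ y ↔ card x ∣ card y := by
  induction x using Quotient.ind with | _ H =>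
  induction y using Quotient.ind with | _ K =>
  constructor
  · rintro ⟨H', K', hH, hK, hle⟩
    rw [← hH, ← hK]
    exact card_dvd_of_le hle
  · intro hdvd
    obtain ⟨L, hL⟩ := CommGroup.exists_subgroup_card_eq_of_dvd (G := K) hdvd
    obtain ⟨e⟩ := hG (L.map K.subtype) H <| by
      rw [card_map_of_injective K.subtype_injective, hL]
      rfl
    exact ⟨L.map K.subtype, K, Quotient.sound ⟨e⟩, rfl, map_subtype_le L⟩

theorem range_card : Set.range (card (G := G)) = {d | d ∣ Nat.card G} := by
  ext d
  constructor
  · rintro ⟨⟨H⟩, rfl⟩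
    exact card_subgroup_dvd_card H
  · intro hd
    obtain ⟨H, hH⟩ := CommGroup.exists_subgroup_card_eq_of_dvd hd
    exact ⟨IsoCls H, hH⟩

end IsoClasses

theorem nonempty_isoClasses_orderIso_of_card_eq {G₁ G₂ : Type*} [CommGroup G₁]
    [CommGroup G₂] [Finite G₁] [Finite G₂] (h₁ : CardDeterminesSubgroups G₁)
    (h₂ : CardDeterminesSubgroups G₂)
    (h : Nat.card G₁ = Nat.card G₂) : Nonempty (IsoClasses G₁ ≃o IsoClasses G₂) :=
  ⟨OrderIso.ofInjectiveOfRangeEq (· ∣ ·) (IsoClasses.card_injective h₁)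
    (IsoClasses.card_injective h₂) (by rw [IsoClasses.range_card, IsoClasses.range_card, h])
    (IsoClasses.le_iff_card_dvd h₁) (IsoClasses.le_iff_card_dvd h₂)⟩

theorem isEmpty_mulEquiv_of_exponent_lt_card {G₁ G₂ : Type*} [Group G₁] [IsCyclic G₁]
    [Group G₂] (h : Monoid.exponent G₂ < Nat.card G₁) : IsEmpty (G₁ ≃* G₂) :=
  ⟨fun e => h.ne' (IsCyclic.exponent_eq_card.symm.trans (Monoid.exponent_eq_of_mulEquiv e))⟩

abbrev ElementaryAbelianProdCyclic (p k m : ℕ) : Type :=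
  Multiplicative (Fin k → ZMod p) × Multiplicative (ZMod m)

namespace ElementaryAbelianProdCyclic

variable (p k m : ℕ)

theorem card_eq : Nat.card (ElementaryAbelianProdCyclic p k m) = p ^ k * m := by
  rw [Nat.card_prod]
  change Nat.card (Fin k → ZMod p) * Nat.card (ZMod m) = _
  rw [Nat.card_fun, Nat.card_zmod, Nat.card_zmod, Nat.card_fin]

theorem exponent_multiplicative_pi_dvd :
    Monoid.exponent (Multiplicative (Fin k → ZMod p)) ∣ p := by
  rw [Monoid.exponent_multiplicative, AddMonoid.exponent_dvd_iff_forall_nsmul_eq_zero]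
  intro f
  ext
  simp

theorem exponent_dvd : Monoid.exponent (ElementaryAbelianProdCyclic p k m) ∣ p * m := by
  rw [Monoid.exponent_prod, IsCyclic.exponent_eq_card (α := Multiplicative (ZMod m))]
  exact lcm_dvd ((exponent_multiplicative_pi_dvd p k).trans (dvd_mul_right p m))
    (dvd_mul_of_dvd_right (Nat.card_zmod m).dvd p)

theorem cardDeterminesSubgroups [Fact p.Prime] [NeZero m] (hpm : p.Coprime m) :
    CardDeterminesSubgroups (ElementaryAbelianProdCyclic p k m) := by
  refine .prod ?_ (cardDeterminesSubgroups_of_exponent_dvd_prime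
    (exponent_multiplicative_pi_dvd p k)) IsCyclic.cardDeterminesSubgroups
  change (Nat.card (Fin k → ZMod p)).Coprime (Nat.card (ZMod m))
  rw [Nat.card_fun, Nat.card_zmod, Nat.card_zmod, Nat.card_fin]
  exact hpm.pow_left k

end ElementaryAbelianProdCyclic

/-- For every integer `n ≥ 2` that is not square-free there exist two
non-isomorphic groups of order `n` whose posets of isomorphism classes of subgroups are
order isomorphic. -/
theorem exists_nonIsomorphic_groups_isoClasses_orderIso (n : ℕ) (hn : 2 ≤ n)
    (h : ¬ Squarefree n) :
    ∃ (G₁ G₂ : Type) (i₁ : Group G₁) (i₂ : Group G₂),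
      letI := i₁; letI := i₂;
      Nat.card G₁ = n ∧ Nat.card G₂ = n ∧ IsEmpty (G₁ ≃* G₂) ∧
        Nonempty (IsoClasses G₁ ≃o IsoClasses G₂) := by
  obtain ⟨p, hp, hp2⟩ : ∃ p, p.Prime ∧ p * p ∣ n := by
    simpa [Nat.squarefree_iff_prime_squarefree] using h
  have : Fact p.Prime := ⟨hp⟩
  have hn0 : n ≠ 0 := by omega
  set k := n.factorization p
  set m := n / p ^ k
  have hk : 2 ≤ k := (hp.pow_dvd_iff_le_factorization hn0).mp (by rwa [sq])
  have : NeZero n := ⟨hn0⟩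
  have : NeZero m := ⟨(Nat.ordCompl_pos p hn0).ne'⟩
  have hG₁ : Nat.card (Multiplicative (ZMod n)) = n := Nat.card_zmod n
  have hG₂ : Nat.card (ElementaryAbelianProdCyclic p k m) = n := by
    rw [ElementaryAbelianProdCyclic.card_eq, Nat.ordProj_mul_ordCompl_eq_self n p]
  refine ⟨Multiplicative (ZMod n), ElementaryAbelianProdCyclic p k m, inferInstance,
    inferInstance, hG₁, hG₂, isEmpty_mulEquiv_of_exponent_lt_card ?_,
    nonempty_isoClasses_orderIso_of_card_eq IsCyclic.cardDeterminesSubgroups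
      (ElementaryAbelianProdCyclic.cardDeterminesSubgroups p k m (Nat.coprime_ordCompl hp hn0))
      (hG₁.trans hG₂.symm)⟩
  calc Monoid.exponent (ElementaryAbelianProdCyclic p k m)
      ≤ p * m := Nat.le_of_dvd (Nat.mul_pos hp.pos (NeZero.pos m))
        (ElementaryAbelianProdCyclic.exponent_dvd p k m)
    _ < p ^ k * m := Nat.mul_lt_mul_of_pos_right (lt_self_pow₀ hp.one_lt hk) (NeZero.pos m)
    _ = Nat.card (Multiplicative (ZMod n)) := by rw [hG₁, Nat.ordProj_mul_ordCompl_eq_self]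
end

section
/- Let n ≥ 1. The total number of subgroups of the dihedral group D_{2n} of order 2n equals τ(n) + σ(n), where τ(n) is the number of divisors of n and σ(n) is the sum of the divisors of n. -/
open AddSubgroup

lemma zmul_card (n : ℕ) [NeZero n] {d : ℕ} (hd : d ∣ n) :
    Nat.card (zmultiples ((d : ℕ) : ZMod n)) = n / d := by
  rw [Nat.card_zmultiples, ZMod.addOrderOf_coe d (NeZero.ne n), Nat.gcd_eq_right hd]

lemma zmul_index (n : ℕ) [NeZero n] {d : ℕ} (hd : d ∣ n) (hd0 : d ≠ 0) :
    (zmultiples ((d : ℕ) : ZMod n)).index = d := by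
  have h := (zmultiples ((d : ℕ) : ZMod n)).card_mul_index
  rw [zmul_card n hd, Nat.card_zmod] at h
  have h2 := Nat.div_div_self hd (NeZero.ne n)
  have hnd : 0 < n / d := Nat.div_pos (Nat.le_of_dvd (Nat.pos_of_ne_zero (NeZero.ne n)) hd) (Nat.pos_of_ne_zero hd0)
  have h3 : n / (n / d) = (zmultiples ((d : ℕ) : ZMod n)).index :=
    Nat.div_eq_of_eq_mul_left hnd (by rw [mul_comm]; exact h.symm)
  rw [← h3, h2]

lemma zmod_surj (n : ℕ) [NeZero n] (A : AddSubgroup (ZMod n)) :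
    ∃ d ∈ n.divisors, zmultiples ((d : ℕ) : ZMod n) = A := by
  obtain ⟨⟨g, hgA⟩, hg⟩ := (inferInstance : IsAddCyclic A).exists_generator
  have hA : A = zmultiples g := by
    apply le_antisymm
    · intro x hx
      obtain ⟨k, hk⟩ := hg ⟨x, hx⟩
      exact ⟨k, congrArg Subtype.val hk⟩
    · exact (zmultiples_le).2 hgA
  set k := addOrderOf g with hk
  have hkd : k ∣ n := by
    have := addOrderOf_dvd_natCard g
    rwa [Nat.card_zmod] at this
  have hk0 : k ≠ 0 := by
    have : 0 < addOrderOf g := addOrderOf_pos g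
    omega
  refine ⟨n / k, Nat.mem_divisors.2 ⟨Nat.div_dvd_of_dvd hkd, NeZero.ne n⟩, ?_⟩
  rw [hA]
  have hdvdn : n / k ∣ n := Nat.div_dvd_of_dvd hkd
  -- show g ∈ zmultiples ((n/k : ℕ) : ZMod n)
  have hg_mem : g ∈ zmultiples (((n / k : ℕ) : ZMod n)) := by
    have hzero : ((k * g.val : ℕ) : ZMod n) = 0 := by
      push_cast
      rw [ZMod.natCast_rightInverse g]
      have := addOrderOf_nsmul_eq_zero g
      rw [← hk] at this
      simpa [nsmul_eq_mul] using this
    have hdvd : n ∣ k * g.val := (ZMod.natCast_eq_zero_iff _ n).1 hzero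
    have hkn : k * (n / k) = n := Nat.mul_div_cancel' hkd
    have hdvd2 : n / k ∣ g.val := by
      have : k * (n / k) ∣ k * g.val := by rwa [hkn]
      exact (Nat.mul_dvd_mul_iff_left (Nat.pos_of_ne_zero hk0)).1 this
    obtain ⟨t, ht⟩ := hdvd2
    refine ⟨(t : ℤ), ?_⟩
    have : g = ((g.val : ℕ) : ZMod n) := (ZMod.natCast_rightInverse g).symm
    show (t : ℤ) • ((n / k : ℕ) : ZMod n) = g
    rw [this, ht, zsmul_eq_mul]
    push_cast
    ring
  apply (AddSubgroup.eq_of_le_of_card_ge _ _).symm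
  · exact (zmultiples_le).2 hg_mem
  · rw [zmul_card n hdvdn, Nat.card_zmultiples, Nat.div_div_self hkd (NeZero.ne n)]

noncomputable def zmodEquiv (n : ℕ) [NeZero n] : {d // d ∈ n.divisors} ≃ AddSubgroup (ZMod n) := by
  apply Equiv.ofBijective (fun d => zmultiples ((d.1 : ℕ) : ZMod n))
  constructor
  · rintro ⟨d₁, h₁⟩ ⟨d₂, h₂⟩ h
    simp only at h
    have e₁ := zmul_index n (Nat.mem_divisors.1 h₁).1 (Nat.pos_of_mem_divisors h₁).ne'
    have e₂ := zmul_index n (Nat.mem_divisors.1 h₂).1 (Nat.pos_of_mem_divisors h₂).ne'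
    rw [h] at e₁
    exact Subtype.ext (e₁.symm.trans e₂)
  · intro A
    obtain ⟨d, hd, hA⟩ := zmod_surj n A
    exact ⟨⟨d, hd⟩, hA⟩

lemma zmodEquiv_index (n : ℕ) [NeZero n] (d : {d // d ∈ n.divisors}) :
    (zmodEquiv n d).index = d.1 :=
  zmul_index n (Nat.mem_divisors.1 d.2).1 (Nat.pos_of_mem_divisors d.2).ne'

open DihedralGroup in
def dsub (n : ℕ) (A : AddSubgroup (ZMod n)) (q : Option (ZMod n ⧸ A)) :
    Subgroup (DihedralGroup n) where
  carrier := {x | match x with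
    | .r i => i ∈ A
    | .sr j => q = some (QuotientAddGroup.mk j)}
  one_mem' := by
    show (1 : DihedralGroup n) ∈ _
    rw [DihedralGroup.one_def]
    exact A.zero_mem
  mul_mem' := by
    rintro (⟨i⟩ | ⟨i⟩) (⟨j⟩ | ⟨j⟩) ha hb
    · rw [Set.mem_setOf_eq, r_mul_r]
      exact A.add_mem ha hb
    · rw [Set.mem_setOf_eq, r_mul_sr]
      show q = some (QuotientAddGroup.mk (j - i))
      have ha' : i ∈ A := ha
      have hb' : q = some (QuotientAddGroup.mk j) := hb
      rw [hb']
      congr 1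
      exact (QuotientAddGroup.eq.2 (by simpa using A.neg_mem ha')).symm
    · rw [Set.mem_setOf_eq, sr_mul_r]
      show q = some (QuotientAddGroup.mk (i + j))
      have ha' : q = some (QuotientAddGroup.mk i) := ha
      have hb' : j ∈ A := hb
      rw [ha']
      congr 1
      exact QuotientAddGroup.eq.2 (by simpa using hb')
    · rw [Set.mem_setOf_eq, sr_mul_sr]
      show j - i ∈ A
      have ha' : q = some (QuotientAddGroup.mk i) := ha
      have hb' : q = some (QuotientAddGroup.mk j) := hb
      have : (QuotientAddGroup.mk i : ZMod n ⧸ A) = QuotientAddGroup.mk j := by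
        have := ha'.symm.trans hb'
        exact Option.some_injective _ this
      have := QuotientAddGroup.eq.1 this
      rwa [neg_add_eq_sub] at this
  inv_mem' := by
    rintro (⟨i⟩ | ⟨i⟩) ha
    · have : (r i : DihedralGroup n)⁻¹ = r (-i) := by
        apply inv_eq_of_mul_eq_one_right
        rw [r_mul_r, add_neg_cancel, DihedralGroup.one_def]
      rw [Set.mem_setOf_eq, this]
      exact A.neg_mem ha
    · have : (sr i : DihedralGroup n)⁻¹ = sr i :=
        inv_eq_of_mul_eq_one_right (sr_mul_self i)
      rw [Set.mem_setOf_eq, this]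
      exact ha

lemma mem_dsub_r (n : ℕ) (A : AddSubgroup (ZMod n)) (q : Option (ZMod n ⧸ A)) (i : ZMod n) :
    DihedralGroup.r i ∈ dsub n A q ↔ i ∈ A := Iff.rfl

lemma mem_dsub_sr (n : ℕ) (A : AddSubgroup (ZMod n)) (q : Option (ZMod n ⧸ A)) (j : ZMod n) :
    DihedralGroup.sr j ∈ dsub n A q ↔ q = some (QuotientAddGroup.mk j) := Iff.rfl

open DihedralGroup in
lemma dsub_bijective (n : ℕ) :
    Function.Bijective (fun p : Σ A : AddSubgroup (ZMod n), Option (ZMod n ⧸ A) =>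
      dsub n p.1 p.2) := by
  constructor
  · rintro ⟨A, q⟩ ⟨A', q'⟩ h
    simp only at h
    obtain rfl : A = A' := by
      ext i
      rw [← mem_dsub_r n A q, ← mem_dsub_r n A' q', h]
    obtain rfl : q = q' := by
      cases hq : q with
      | none =>
        cases hq' : q' with
        | none => rfl
        | some x =>
          obtain ⟨j, rfl⟩ := QuotientAddGroup.mk_surjective x
          have : sr j ∈ dsub n A q' := (mem_dsub_sr n A q' j).2 hq'
          rw [← h] at this
          rw [mem_dsub_sr, hq] at this
          exact absurd this (by simp)
      | some x =>
        obtain ⟨j, rfl⟩ := QuotientAddGroup.mk_surjective x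
        have : sr j ∈ dsub n A q := (mem_dsub_sr n A q j).2 hq
        rw [h] at this
        rw [mem_dsub_sr] at this
        exact this.symm
    rfl
  · intro H
    set A : AddSubgroup (ZMod n) :=
             { carrier := {i | r i ∈ H}
               zero_mem' := by show r 0 ∈ H; rw [← DihedralGroup.one_def]; exact H.one_mem
               add_mem' := by
                 intro a b ha hb
                 show r (a + b) ∈ H
                 rw [← r_mul_r]
                 exact H.mul_mem ha hb
               neg_mem' := by
                 intro a ha
                 show r (-a) ∈ H
                 have : (r a : DihedralGroup n)⁻¹ = r (-a) := by
                   apply inv_eq_of_mul_eq_one_right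
                   rw [r_mul_r, add_neg_cancel, DihedralGroup.one_def]
                 rw [← this]
                 exact H.inv_mem ha } with hAdef
    have hmemA : ∀ i : ZMod n, i ∈ A ↔ r i ∈ H := fun i => Iff.rfl
    by_cases hs : ∃ j, sr j ∈ H
    · obtain ⟨j₀, hj₀⟩ := hs
      refine ⟨⟨A, some (QuotientAddGroup.mk j₀)⟩, ?_⟩
      ext x
      cases x with
      | r i => exact Iff.rfl
      | sr j =>
        show some _ = some _ ↔ _
        constructor
        · intro hsome
          have heq : (QuotientAddGroup.mk j₀ : ZMod n ⧸ A) = QuotientAddGroup.mk j :=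
            Option.some_injective _ hsome
          have hmem : -j₀ + j ∈ A := QuotientAddGroup.eq.1 heq
          have hr : r (-j₀ + j) ∈ H := (hmemA _).1 hmem
          have : sr j₀ * r (-j₀ + j) = sr j := by
            rw [sr_mul_r, add_neg_cancel_left]
          rw [← this]
          exact H.mul_mem hj₀ hr
        · intro hj
          have hr : r (j - j₀) ∈ H := by
            rw [← sr_mul_sr j₀ j]
            exact H.mul_mem hj₀ hj
          have hmem : -j₀ + j ∈ A := by
            rw [neg_add_eq_sub]
            exact (hmemA _).2 hr
          exact congrArg some (QuotientAddGroup.eq.2 hmem)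
    · refine ⟨⟨A, none⟩, ?_⟩
      ext x
      cases x with
      | r i => exact Iff.rfl
      | sr j =>
        show (none : Option (ZMod n ⧸ A)) = some _ ↔ _
        constructor
        · intro h; exact absurd h (by simp)
        · intro h; exact absurd ⟨j, h⟩ hs

/-- For `n ≥ 1`, the number of subgroups of the dihedral group `D_{2n}`
equals `τ(n) + σ(n)`, the number of divisors of `n` plus the sum of the divisors of `n`. -/
theorem card_subgroup_dihedralGroup (n : ℕ) (hn : 1 ≤ n) :
    Nat.card (Subgroup (DihedralGroup n)) = n.divisors.card + ∑ d ∈ n.divisors, d := by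
  haveI : NeZero n := ⟨by omega⟩
  classical
  haveI : Fintype (AddSubgroup (ZMod n)) := Fintype.ofFinite _
  haveI : ∀ A : AddSubgroup (ZMod n), Fintype (ZMod n ⧸ A) := fun A => Fintype.ofFinite _
  rw [Nat.card_congr (Equiv.ofBijective _ (dsub_bijective n)).symm,
    Nat.card_eq_fintype_card, Fintype.card_sigma]
  have hA : ∀ A : AddSubgroup (ZMod n), Fintype.card (Option (ZMod n ⧸ A)) = A.index + 1 := by
    intro A
    rw [Fintype.card_option]
    congr 1
    rw [← Nat.card_eq_fintype_card]
    rfl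
  rw [Finset.sum_congr rfl (fun A _ => hA A), Finset.sum_add_distrib]
  have h1 : ∑ A : AddSubgroup (ZMod n), (1 : ℕ) = n.divisors.card := by
    rw [Finset.sum_const, smul_eq_mul, mul_one, Finset.card_univ,
      ← Fintype.card_coe n.divisors]
    exact (Fintype.card_congr (zmodEquiv n)).symm
  have h2 : ∑ A : AddSubgroup (ZMod n), A.index = ∑ d ∈ n.divisors, d := by
    rw [← Equiv.sum_comp (zmodEquiv n) (fun A => A.index)]
    rw [Finset.sum_congr rfl (fun d _ => zmodEquiv_index n d)]
    exact Finset.sum_coe_sort n.divisors id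
  rw [h1, h2, Nat.add_comm]
end

section
/- Let G be a finite group such that Iso(G) is a lattice (every pair of classes in Iso(G) has a greatest lower bound and a least upper bound). Then for every two distinct primes p and q dividing |G|, either every subgroup of G of order pq is cyclic, or every subgroup of G of order pq is non-abelian. -/
section AuxLemmas
variable {G : Type*} [Group G]

lemma isoCls_nonempty_mulEquiv {A B : Subgroup G} (h : IsoCls A = IsoCls B) :
    Nonempty (A ≃* B) := Quotient.exact h

lemma isoCls_card_eq {A B : Subgroup G} (h : IsoCls A = IsoCls B) :
    Nat.card A = Nat.card B :=
  Nat.card_congr (isoCls_nonempty_mulEquiv h).some.toEquiv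

lemma isCyclic_of_isoCls_eq {A B : Subgroup G} (h : IsoCls A = IsoCls B)
    (hA : IsCyclic A) : IsCyclic B := by
  obtain ⟨e⟩ := isoCls_nonempty_mulEquiv h
  exact isCyclic_of_surjective e.toMonoidHom e.surjective

end AuxLemmas

theorem subgroups_of_order_pq_of_isoClasses_lattice (G : Type*) [Group G] [Finite G]
    (hL : IsoClasses.IsLattice G) :
    ∀ p q : ℕ, p.Prime → q.Prime → p ≠ q → p ∣ Nat.card G → q ∣ Nat.card G →
      (∀ H : Subgroup G, Nat.card H = p * q → IsCyclic H) ∨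
      (∀ H : Subgroup G, Nat.card H = p * q → ¬ ∀ a b : H, a * b = b * a) := by
  intro p q hp hq hpq _ _
  haveI := Fact.mk hp
  haveI := Fact.mk hq
  by_contra hcon
  push_neg at hcon
  obtain ⟨⟨H, hHcard, hHnc⟩, ⟨K, hKcard, hKab⟩⟩ := hcon
  have hco : Nat.Coprime p q := (Nat.coprime_primes hp hq).2 hpq
  -- K is cyclic
  obtain ⟨aK, haK⟩ := exists_prime_orderOf_dvd_card' (G := K) p (hKcard ▸ Dvd.intro q rfl)
  obtain ⟨bK, hbK⟩ := exists_prime_orderOf_dvd_card' (G := K) q (hKcard ▸ Dvd.intro_left p rfl)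
  have hKcyc : IsCyclic K := by
    apply isCyclic_of_orderOf_eq_card (aK * bK)
    have hcomm : Commute aK bK := hKab aK bK
    rw [hcomm.orderOf_mul_eq_mul_orderOf_of_coprime (by rw [haK, hbK]; exact hco),
      haK, hbK, hKcard]
  -- elements of order p and q in H
  obtain ⟨aH, haH⟩ := exists_prime_orderOf_dvd_card' (G := H) p (hHcard ▸ Dvd.intro q rfl)
  obtain ⟨bH, hbH⟩ := exists_prime_orderOf_dvd_card' (G := H) q (hHcard ▸ Dvd.intro_left p rfl)
  set P : Subgroup G := Subgroup.zpowers (aK : G) with hP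
  set Q : Subgroup G := Subgroup.zpowers (bK : G) with hQ
  set P' : Subgroup G := Subgroup.zpowers (aH : G) with hP'
  set Q' : Subgroup G := Subgroup.zpowers (bH : G) with hQ'
  have hPcard : Nat.card P = p := by
    rw [hP, Nat.card_zpowers, Subgroup.orderOf_coe, haK]
  have hQcard : Nat.card Q = q := by
    rw [hQ, Nat.card_zpowers, Subgroup.orderOf_coe, hbK]
  have hP'card : Nat.card P' = p := by
    rw [hP', Nat.card_zpowers, Subgroup.orderOf_coe, haH]
  have hQ'card : Nat.card Q' = q := by
    rw [hQ', Nat.card_zpowers, Subgroup.orderOf_coe, hbH]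
  have hPK : P ≤ K := (Subgroup.zpowers_le).2 aK.2
  have hQK : Q ≤ K := (Subgroup.zpowers_le).2 bK.2
  have hP'H : P' ≤ H := (Subgroup.zpowers_le).2 aH.2
  have hQ'H : Q' ≤ H := (Subgroup.zpowers_le).2 bH.2
  have hPP' : IsoCls P' = IsoCls P :=
    Quotient.sound ⟨mulEquivOfPrimeCardEq (p := p) hP'card hPcard⟩
  have hQQ' : IsoCls Q' = IsoCls Q :=
    Quotient.sound ⟨mulEquivOfPrimeCardEq (p := q) hQ'card hQcard⟩
  obtain ⟨z, hPz, hQz, hmin⟩ := (hL (IsoCls P) (IsoCls Q)).2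
  have hzK : z ≤ IsoCls K :=
    hmin _ ⟨P, K, rfl, rfl, hPK⟩ ⟨Q, K, rfl, rfl, hQK⟩
  have hzH : z ≤ IsoCls H :=
    hmin _ ⟨P', H, hPP', rfl, hP'H⟩ ⟨Q', H, hQQ', rfl, hQ'H⟩
  obtain ⟨L, M, hLz, hMH, hLM⟩ := hzH
  obtain ⟨L', M', hL'z, hM'K, hL'M'⟩ := hzK
  obtain ⟨A, B, hA, hB, hAB⟩ := hPz
  obtain ⟨C, D, hC, hD, hCD⟩ := hQz
  -- p and q divide card L
  have hpL : p ∣ Nat.card L := by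
    have h1 : Nat.card A = p := (isoCls_card_eq hA).trans hPcard
    have h2 : Nat.card B = Nat.card L := isoCls_card_eq (hB.trans hLz.symm)
    exact h1 ▸ h2 ▸ Subgroup.card_dvd_of_le hAB
  have hqL : q ∣ Nat.card L := by
    have h1 : Nat.card C = q := (isoCls_card_eq hC).trans hQcard
    have h2 : Nat.card D = Nat.card L := isoCls_card_eq (hD.trans hLz.symm)
    exact h1 ▸ h2 ▸ Subgroup.card_dvd_of_le hCD
  have hMcard : Nat.card M = p * q := (isoCls_card_eq hMH).trans hHcard
  have hpqL : p * q ∣ Nat.card L := Nat.Coprime.mul_dvd_of_dvd_of_dvd hco hpL hqL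
  have hLMeq : L = M := by
    apply Subgroup.eq_of_le_of_card_ge hLM
    rw [hMcard]
    exact Nat.le_of_dvd Nat.card_pos hpqL
  -- L' is cyclic since it sits inside M' ≅ K
  have hM'cyc : IsCyclic M' := isCyclic_of_isoCls_eq hM'K.symm hKcyc
  have hL'cyc : IsCyclic L' := by
    have e : (L'.subgroupOf M') ≃* L' := Subgroup.subgroupOfEquivOfLe hL'M'
    exact isCyclic_of_surjective e.toMonoidHom e.surjective
  have hLcyc : IsCyclic L := isCyclic_of_isoCls_eq (hL'z.trans hLz.symm) hL'cyc
  exact hHnc (isCyclic_of_isoCls_eq hMH (hLMeq ▸ hLcyc))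
end
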